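/- arXiv:1111.6278 — 7 statements merged into one kernel-verified Lean document; each statement's English description precedes it below -/
import Mathlib

section
/- Let G be a connected simple graph with n vertices and s ≥ 2 edges. If G is bipartite, then the kernel of the group homomorphism θ : (K^*)^n → (K^*)^s has order q−1. If G is non-bipartite, then the kernel of θ has order 2 when q is odd, and θ is injective when q is even. -/
/-!
A vector `x` lies in the kernel of `θ` iff `x v * x w = 1` along every edge, so along a walk
of length `ℓ` from `u` to `v` we get `x v = x u ^ (±1)`, the sign being the parity of `ℓ`.
In a connected graph the kernel therefore embeds into `Kˣ` by evaluation at a vertex `u`.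
If `G` is bipartite, every value at `u` is attained (put `a` on one colour class and `a⁻¹`
on the other), so the kernel has order `q - 1`. Otherwise an odd closed walk at `u` forces
`x u = (x u)⁻¹`, and the kernel consists of the constant vectors `±1`: two of them when `q`
is odd, one when `q` is even, in which case the group homomorphism `θ` is injective.
-/

open MvPolynomial

noncomputable section

/-- For `x : Fin n → M` and an edge `E = {j,k}` (as an element of `Sym2 (Fin n)`),
`edgeProd x E = x j * x k`. -/
def edgeProd {M : Type} [CommMonoid M] {n : ℕ} (x : Fin n → M) (E : Sym2 (Fin n)) : M :=
  Sym2.lift ⟨fun a b => x a * x b, fun a b => mul_comm (x a) (x b)⟩ E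

namespace SimpleGraph

def edgeKernel {V : Type*} (G : SimpleGraph V) (M : Type*) [CommGroup M] : Set (V → M) :=
  {x | ∀ ⦃v w⦄, G.Adj v w → x v * x w = 1}

variable {V M : Type*} [CommGroup M] {G : SimpleGraph V}

lemma one_mem_edgeKernel : (1 : V → M) ∈ G.edgeKernel M := fun _ _ _ => mul_one 1

lemma Walk.apply_eq_of_mem_edgeKernel {x : V → M} (hx : x ∈ G.edgeKernel M) {u v : V}
    (p : G.Walk u v) : x v = if Even p.length then x u else (x u)⁻¹ := by
  induction p with
  | nil => simp
  | @cons a b c hab p ih =>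
    have hb : x b = (x a)⁻¹ := eq_inv_of_mul_eq_one_right (hx hab)
    rw [ih, hb, Walk.length_cons]
    by_cases h : Even p.length <;> simp [h, Nat.even_add_one]

lemma Walk.sq_eq_one_of_mem_edgeKernel {x : V → M} (hx : x ∈ G.edgeKernel M) {u : V}
    (p : G.Walk u u) (hp : Odd p.length) : x u ^ 2 = 1 := by
  have h := p.apply_eq_of_mem_edgeKernel hx
  rw [if_neg (Nat.not_even_iff_odd.mpr hp)] at h
  rw [sq, mul_eq_one_iff_eq_inv, ← h]

lemma Preconnected.eq_of_mem_edgeKernel (hG : G.Preconnected) {x y : V → M}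
    (hx : x ∈ G.edgeKernel M) (hy : y ∈ G.edgeKernel M) {u : V} (h : x u = y u) : x = y := by
  funext v
  obtain ⟨p⟩ := hG u v
  rw [p.apply_eq_of_mem_edgeKernel hx, p.apply_eq_of_mem_edgeKernel hy, h]

lemma Connected.card_edgeKernel_of_colorable (hG : G.Connected) (hc : G.Colorable 2) :
    Nat.card (G.edgeKernel M) = Nat.card M := by
  obtain ⟨u⟩ := hG.nonempty
  obtain ⟨c⟩ : Nonempty (G.Coloring Bool) := ⟨G.recolorOfEquiv finTwoEquiv hc.some⟩
  refine Nat.card_eq_of_bijective (fun x => x.1 u)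
    ⟨fun x y h => Subtype.ext (hG.preconnected.eq_of_mem_edgeKernel x.2 y.2 h), fun a => ?_⟩
  refine ⟨⟨fun v => if c v = c u then a else a⁻¹, fun v w hvw => ?_⟩, if_pos rfl⟩
  change (if c v = c u then a else a⁻¹) * (if c w = c u then a else a⁻¹) = 1
  have hcvw := c.valid hvw
  revert hcvw
  generalize c u = k; generalize c v = i; generalize c w = j
  cases i <;> cases j <;> cases k <;> simp

lemma exists_odd_loop_of_not_colorable (hc : ¬ G.Colorable 2) :
    ∃ u, ∃ p : G.Walk u u, Odd p.length := by
  simpa [two_colorable_iff_forall_loop_even] using hc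

lemma Preconnected.card_edgeKernel_of_not_colorable (hG : G.Preconnected)
    (hc : ¬ G.Colorable 2) : Nat.card (G.edgeKernel M) = Nat.card {a : M // a ^ 2 = 1} := by
  obtain ⟨u, p, hp⟩ := exists_odd_loop_of_not_colorable hc
  refine Nat.card_eq_of_bijective (fun x => ⟨x.1 u, p.sq_eq_one_of_mem_edgeKernel x.2 hp⟩)
    ⟨fun x y h => Subtype.ext (hG.eq_of_mem_edgeKernel x.2 y.2 congr($h.1)),
      fun a => ⟨⟨fun _ => a.1, fun _ _ _ => by rw [← sq, a.2]⟩, rfl⟩⟩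

lemma Preconnected.eq_one_of_mem_edgeKernel_of_not_colorable (hG : G.Preconnected)
    (hc : ¬ G.Colorable 2) (hM : ∀ a : M, a ^ 2 = 1 → a = 1) {x : V → M}
    (hx : x ∈ G.edgeKernel M) : x = 1 := by
  obtain ⟨u, p, hp⟩ := exists_odd_loop_of_not_colorable hc
  exact hG.eq_of_mem_edgeKernel hx one_mem_edgeKernel (hM _ (p.sq_eq_one_of_mem_edgeKernel hx hp))

end SimpleGraph

section Units

variable {R : Type*} [Ring R] [NoZeroDivisors R]

lemma Units.sq_eq_one_iff_eq_one_or_eq_neg_one {a : Rˣ} : a ^ 2 = 1 ↔ a = 1 ∨ a = -1 := by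
  simp only [Units.ext_iff, Units.val_pow_eq_pow_val, Units.val_one, Units.val_neg, sq_eq_one_iff]

lemma Units.eq_one_of_sq_eq_one_of_ringChar_eq_two [Nontrivial R] (hR : ringChar R = 2) {a : Rˣ}
    (ha : a ^ 2 = 1) : a = 1 := by
  have hneg : (-1 : Rˣ) = 1 := Units.ext (by simpa using neg_one_eq_one_iff.mpr hR)
  simpa [hneg] using Units.sq_eq_one_iff_eq_one_or_eq_neg_one.mp ha

lemma Units.card_sq_eq_one_of_ringChar_ne_two [Nontrivial R] (hR : ringChar R ≠ 2) :
    Nat.card {a : Rˣ // a ^ 2 = 1} = 2 := by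
  have hne : (1 : Rˣ) ≠ -1 := fun h => hR (neg_one_eq_one_iff.mp congr(($h.symm : R)))
  calc Nat.card {a : Rˣ // a ^ 2 = 1}
      = Nat.card ({1, -1} : Set Rˣ) :=
        Nat.card_congr (Equiv.subtypeEquivRight fun _ => Units.sq_eq_one_iff_eq_one_or_eq_neg_one)
    _ = 2 := by rw [Nat.card_coe_set_eq, Set.ncard_pair hne]

end Units

open SimpleGraph

section EdgeProd

variable {M : Type} {n s : ℕ}

@[simp]
lemma edgeProd_mk [CommMonoid M] (x : Fin n → M) (a b : Fin n) :
    edgeProd x s(a, b) = x a * x b := rfl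

lemma edgeProd_div [CommGroup M] (x y : Fin n → M) (E : Sym2 (Fin n)) :
    edgeProd (x / y) E = edgeProd x E / edgeProd y E := by
  induction E using Sym2.ind with
  | h a b => simp [mul_div_mul_comm]

lemma forall_edgeProd_eq_one_iff [CommGroup M] {e : Fin s → Sym2 (Fin n)}
    (hnd : ∀ i, ¬ (e i).IsDiag) {x : Fin n → M} :
    (∀ i, edgeProd x (e i) = 1) ↔ x ∈ (fromEdgeSet (Set.range e)).edgeKernel M := by
  refine ⟨fun h v w hvw => ?_, fun hx i => ?_⟩
  · obtain ⟨⟨i, hi⟩, -⟩ := (fromEdgeSet_adj _).mp hvw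
    simpa [hi] using h i
  · have key : ∀ E ∈ Set.range e, ¬ E.IsDiag → edgeProd x E = 1 := by
      intro E hE hdiag
      induction E using Sym2.ind with
      | h v w => exact hx ((fromEdgeSet_adj _).mpr ⟨hE, by simpa using hdiag⟩)
    exact key (e i) ⟨i, rfl⟩ (hnd i)

end EdgeProd

theorem kernel_of_theta_order_general
    (q n s : ℕ) (K : Type) [Field K] [Fintype K]
    (hcard : Fintype.card K = q)
    (e : Fin s → Sym2 (Fin n))
    (hnd : ∀ i, ¬ (e i).IsDiag)
    (hconn : (SimpleGraph.fromEdgeSet (Set.range e)).Connected) :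
    ((SimpleGraph.fromEdgeSet (Set.range e)).Colorable 2 →
        Nat.card {x : Fin n → Kˣ // ∀ i, edgeProd x (e i) = 1} = q - 1) ∧
    (¬ (SimpleGraph.fromEdgeSet (Set.range e)).Colorable 2 →
        (Odd q → Nat.card {x : Fin n → Kˣ // ∀ i, edgeProd x (e i) = 1} = 2) ∧
        (Even q →
          Function.Injective fun (x : Fin n → Kˣ) => fun i : Fin s => edgeProd x (e i))) := by
  have hker : Nat.card {x : Fin n → Kˣ // ∀ i, edgeProd x (e i) = 1}
      = Nat.card ((fromEdgeSet (Set.range e)).edgeKernel Kˣ) :=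
    Nat.card_congr (Equiv.subtypeEquivRight fun _ => forall_edgeProd_eq_one_iff hnd)
  refine ⟨fun hc => ?_, fun hc => ⟨fun hodd => ?_, fun heven => ?_⟩⟩
  · rw [hker, hconn.card_edgeKernel_of_colorable hc, Nat.card_units,
      Nat.card_eq_fintype_card, hcard]
  · have hK : ringChar K ≠ 2 := fun h => by
      have := FiniteField.even_card_iff_char_two.mp h
      rw [hcard, ← Nat.even_iff] at this
      exact Nat.not_even_iff_odd.mpr hodd this
    rw [hker, hconn.preconnected.card_edgeKernel_of_not_colorable hc,
      Units.card_sq_eq_one_of_ringChar_ne_two hK]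
  · have hK : ringChar K = 2 :=
      FiniteField.even_card_iff_char_two.mpr (hcard ▸ Nat.even_iff.mp heven)
    intro x y hxy
    have hdiv : x / y ∈ (fromEdgeSet (Set.range e)).edgeKernel Kˣ :=
      (forall_edgeProd_eq_one_iff hnd).mp fun i => by
        rw [edgeProd_div, div_eq_one]
        exact congr_fun hxy i
    exact div_eq_one.mp (hconn.preconnected.eq_one_of_mem_edgeKernel_of_not_colorable hc
      (fun _ => Units.eq_one_of_sq_eq_one_of_ringChar_eq_two hK) hdiv)

/-- Let `G` be a connected simple graph with `n` vertices and `s ≥ 2` edges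
(edges enumerated injectively by `e : Fin s → Sym2 (Fin n)`, none of them loops, and with
no isolated vertices), over a finite field `K` with `q > 2` elements.  Let
`θ : (Kˣ)ⁿ → (Kˣ)ˢ` be `x ↦ (xᵉ¹, …, xᵉˢ)`.  If `G` is bipartite then the kernel of `θ`
has order `q − 1`; if `G` is non-bipartite then the kernel has order `2` when `q` is odd
and `θ` is injective when `q` is even. -/
theorem kernel_of_theta_order
    (q n s : ℕ) (hq : 2 < q) (K : Type) [Field K] [Fintype K]
    (hcard : Fintype.card K = q) (hs : 2 ≤ s)
    (e : Fin s → Sym2 (Fin n)) (he : Function.Injective e)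
    (hnd : ∀ i, ¬ (e i).IsDiag)
    (hiso : ∀ v : Fin n, ∃ i, v ∈ e i)
    (hconn : (SimpleGraph.fromEdgeSet (Set.range e)).Connected) :
    ((SimpleGraph.fromEdgeSet (Set.range e)).Colorable 2 →
        Nat.card {x : Fin n → Kˣ // ∀ i, edgeProd x (e i) = 1} = q - 1) ∧
    (¬ (SimpleGraph.fromEdgeSet (Set.range e)).Colorable 2 →
        (Odd q → Nat.card {x : Fin n → Kˣ // ∀ i, edgeProd x (e i) = 1} = 2) ∧
        (Even q →
          Function.Injective fun (x : Fin n → Kˣ) => fun i : Fin s => edgeProd x (e i))) :=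
  kernel_of_theta_order_general q n s K hcard e hnd hconn
end
end

section
/- Let G be a connected simple graph with s ≥ 2 edges. Then the order of the subgroup X^* ∩ Λ of (K^*)^s (which is the kernel of the restriction to X^* of the quotient homomorphism (K^*)^s → (K^*)^s/Λ) equals: (q−1)/2 if G is non-bipartite and q is odd; q−1 if G is non-bipartite and q is even; and q−1 if G is bipartite. -/
/-!
The elements of `X* ∩ Λ` correspond to the `λ ∈ Kˣ` for which some weighting `x` of the
vertices has `x_j x_k = λ` on every edge. Constant weightings realise every square. If `G` is
bipartite, weighting one side by `λ` and the other by `1` realises every `λ`. If `x` realises a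
non-square `λ`, then the endpoints of every edge have opposite quadratic character, because in
the cyclic group `Kˣ` a product of two squares or of two non-squares is a square; so quadratic
character is a proper 2-colouring. Hence for non-bipartite `G` exactly the squares are
realised, a subgroup of index `gcd (q - 1) 2`.
-/

open MvPolynomial

noncomputable section

/-- The diagonal subgroup `Λ = {(λ,…,λ) : λ ∈ Kˣ}` of `(Kˣ)ˢ`. -/
def diagSubgroup (K : Type) [Field K] (s : ℕ) : Subgroup (Fin s → Kˣ) where
  carrier := {y | ∃ l : Kˣ, y = fun _ => l}
  one_mem' := ⟨1, rfl⟩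
  mul_mem' := by rintro _ _ ⟨a, rfl⟩ ⟨b, rfl⟩; exact ⟨a * b, rfl⟩
  inv_mem' := by rintro _ ⟨a, rfl⟩; exact ⟨a⁻¹, rfl⟩

lemma Subgroup.square_eq_range_powMonoidHom (G : Type*) [CommGroup G] :
    Subgroup.square G = (powMonoidHom 2 : G →* G).range := by
  ext a
  simp [isSquare_iff_exists_sq, eq_comm]

lemma IsCyclic.card_square (G : Type*) [CommGroup G] [IsCyclic G] [Finite G] :
    Nat.card (Subgroup.square G) = Nat.card G / (Nat.card G).gcd 2 := by
  rw [Subgroup.square_eq_range_powMonoidHom, IsCyclic.card_powMonoidHom_range]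

lemma IsCyclic.isSquare_mul_of_not_isSquare {G : Type*} [CommGroup G] [IsCyclic G] [Finite G]
    {a b : G} (ha : ¬IsSquare a) (hb : ¬IsSquare b) : IsSquare (a * b) := by
  have hindex : (Subgroup.square G).index = (Nat.card G).gcd 2 := by
    rw [Subgroup.square_eq_range_powMonoidHom, IsCyclic.index_powMonoidHom_range]
  rcases (Nat.dvd_prime Nat.prime_two).1 (hindex ▸ Nat.gcd_dvd_right _ _) with h1 | h2
  · exact absurd (Subgroup.index_eq_one.1 h1 ▸ Subgroup.mem_top a : a ∈ Subgroup.square G) ha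
  · exact (Subgroup.mul_mem_iff_of_index_two h2).2 (iff_of_false ha hb)

section EdgeProd

variable {M : Type} [CommMonoid M] {n : ℕ} {ι : Type*}

def IsConstEdgeProd (e : ι → Sym2 (Fin n)) (l : M) : Prop :=
  ∃ x : Fin n → M, ∀ i, edgeProd x (e i) = l

lemma isConstEdgeProd_of_isSquare (e : ι → Sym2 (Fin n)) {l : M} (hl : IsSquare l) :
    IsConstEdgeProd e l := by
  obtain ⟨t, rfl⟩ := hl
  exact ⟨fun _ => t, fun i => Sym2.ind (fun _ _ => rfl) (e i)⟩

lemma isConstEdgeProd_of_colorable {e : ι → Sym2 (Fin n)} (hnd : ∀ i, ¬(e i).IsDiag)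
    (hcol : (SimpleGraph.fromEdgeSet (Set.range e)).Colorable 2) (l : M) :
    IsConstEdgeProd e l := by
  obtain ⟨C⟩ := hcol
  refine ⟨fun v => if C v = 0 then l else 1, fun i => ?_⟩
  have hedge : e i ∈ (SimpleGraph.fromEdgeSet (Set.range e)).edgeSet := by
    rw [SimpleGraph.edgeSet_fromEdgeSet]
    exact ⟨⟨i, rfl⟩, hnd i⟩
  generalize e i = E at hedge ⊢
  induction E using Sym2.ind with
  | _ a b =>
    have hab := C.valid hedge
    change (if C a = 0 then l else 1) * (if C b = 0 then l else 1) = l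
    generalize C a = ca, C b = cb at hab
    fin_cases ca <;> fin_cases cb <;> simp_all

lemma IsConstEdgeProd.isSquare {G : Type} [CommGroup G] [IsCyclic G] [Finite G]
    {e : ι → Sym2 (Fin n)}
    (hG : ¬(SimpleGraph.fromEdgeSet (Set.range e)).Colorable 2) {l : G}
    (h : IsConstEdgeProd e l) : IsSquare l := by
  classical
  obtain ⟨x, hx⟩ := h
  by_contra hl
  refine hG ⟨SimpleGraph.Coloring.mk (fun v => if IsSquare (x v) then 0 else 1) ?_⟩
  intro a b hab hcolor
  obtain ⟨⟨i, hi⟩, -⟩ := (SimpleGraph.fromEdgeSet_adj _).1 hab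
  have hxab : x a * x b = l := by rw [← hx i, hi]; rfl
  apply hl
  rw [← hxab]
  by_cases ha : IsSquare (x a) <;> by_cases hb : IsSquare (x b) <;> simp [ha, hb] at hcolor
  · exact ha.mul hb
  · exact IsCyclic.isSquare_mul_of_not_isSquare ha hb

end EdgeProd

lemma card_range_edgeProd_inter_diagSubgroup {K : Type} [Field K] {n s : ℕ} [NeZero s]
    (e : Fin s → Sym2 (Fin n)) :
    Nat.card {y : Fin s → Kˣ //
      (y ∈ Set.range fun (x : Fin n → Kˣ) (i : Fin s) => edgeProd x (e i)) ∧
      y ∈ diagSubgroup K s} = Nat.card {l : Kˣ // IsConstEdgeProd e l} := by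
  refine Nat.card_congr
    { toFun := fun y => ⟨y.1 0, ?_⟩
      invFun := fun l => ⟨fun _ => l.1, ?_, l.1, rfl⟩
      left_inv := ?_
      right_inv := fun _ => rfl }
  · obtain ⟨_, ⟨x, hx⟩, l, rfl⟩ := y
    exact ⟨x, fun i => congrFun hx i⟩
  · obtain ⟨l, x, hx⟩ := l
    exact ⟨x, funext hx⟩
  · rintro ⟨_, -, l, rfl⟩
    rfl

theorem order_of_Xstar_inter_diag_general
    (q n s : ℕ) (hq : 2 < q) (K : Type) [Field K] [Fintype K]
    (hcard : Fintype.card K = q) (hs : 2 ≤ s)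
    (e : Fin s → Sym2 (Fin n))
    (hnd : ∀ i, ¬ (e i).IsDiag) :
    (¬ (SimpleGraph.fromEdgeSet (Set.range e)).Colorable 2 →
        (Odd q → Nat.card {y : Fin s → Kˣ //
            (y ∈ Set.range fun (x : Fin n → Kˣ) (i : Fin s) => edgeProd x (e i)) ∧
            y ∈ diagSubgroup K s} = (q - 1) / 2) ∧
        (Even q → Nat.card {y : Fin s → Kˣ //
            (y ∈ Set.range fun (x : Fin n → Kˣ) (i : Fin s) => edgeProd x (e i)) ∧
            y ∈ diagSubgroup K s} = q - 1)) ∧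
    ((SimpleGraph.fromEdgeSet (Set.range e)).Colorable 2 →
        Nat.card {y : Fin s → Kˣ //
            (y ∈ Set.range fun (x : Fin n → Kˣ) (i : Fin s) => edgeProd x (e i)) ∧
            y ∈ diagSubgroup K s} = q - 1) := by
  have : NeZero s := ⟨by omega⟩
  have hunits : Nat.card Kˣ = q - 1 := by rw [Nat.card_units, Nat.card_eq_fintype_card, hcard]
  rw [card_range_edgeProd_inter_diagSubgroup]
  refine ⟨fun hnb => ?_, fun hb => ?_⟩
  · have hsq : Nat.card {l : Kˣ // IsConstEdgeProd e l} = (q - 1) / (q - 1).gcd 2 := by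
      rw [← hunits, ← IsCyclic.card_square]
      exact Nat.card_congr (Equiv.subtypeEquivRight fun l =>
        ⟨IsConstEdgeProd.isSquare hnb, isConstEdgeProd_of_isSquare e⟩)
    refine ⟨fun hodd => ?_, fun heven => ?_⟩
    · rw [hsq, Nat.gcd_eq_right (even_iff_two_dvd.1 (Nat.Odd.sub_odd hodd odd_one))]
    · have hodd : Odd (q - 1) := Nat.Even.sub_odd (by omega) heven odd_one
      rw [hsq, Nat.Coprime.gcd_eq_one (Nat.coprime_two_right.2 hodd), Nat.div_one]
  · rw [Nat.card_congr (Equiv.subtypeUnivEquiv (isConstEdgeProd_of_colorable hnd hb)), hunits]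

/-- Let `G` be a connected simple graph with `s ≥ 2` edges, over a finite
field `K` with `q > 2` elements, `X* = θ((Kˣ)ⁿ)` and `Λ` the diagonal subgroup of `(Kˣ)ˢ`.
Then the order of `X* ∩ Λ` (the kernel of the restriction to `X*` of the quotient map
`(Kˣ)ˢ → (Kˣ)ˢ/Λ`) is `(q−1)/2` if `G` is non-bipartite and `q` odd, `q−1` if `G` is
non-bipartite and `q` is even, and `q−1` if `G` is bipartite. -/
theorem order_of_Xstar_inter_diag
    (q n s : ℕ) (hq : 2 < q) (K : Type) [Field K] [Fintype K]
    (hcard : Fintype.card K = q) (hs : 2 ≤ s)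
    (e : Fin s → Sym2 (Fin n)) (he : Function.Injective e)
    (hnd : ∀ i, ¬ (e i).IsDiag)
    (hiso : ∀ v : Fin n, ∃ i, v ∈ e i)
    (hconn : (SimpleGraph.fromEdgeSet (Set.range e)).Connected) :
    (¬ (SimpleGraph.fromEdgeSet (Set.range e)).Colorable 2 →
        (Odd q → Nat.card {y : Fin s → Kˣ //
            (y ∈ Set.range fun (x : Fin n → Kˣ) (i : Fin s) => edgeProd x (e i)) ∧
            y ∈ diagSubgroup K s} = (q - 1) / 2) ∧
        (Even q → Nat.card {y : Fin s → Kˣ //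
            (y ∈ Set.range fun (x : Fin n → Kˣ) (i : Fin s) => edgeProd x (e i)) ∧
            y ∈ diagSubgroup K s} = q - 1)) ∧
    ((SimpleGraph.fromEdgeSet (Set.range e)).Colorable 2 →
        Nat.card {y : Fin s → Kˣ //
            (y ∈ Set.range fun (x : Fin n → Kˣ) (i : Fin s) => edgeProd x (e i)) ∧
            y ∈ diagSubgroup K s} = q - 1) :=
  order_of_Xstar_inter_diag_general q n s hq K hcard hs e hnd
end
end

section
/- Let X^* ⊆ (K^*)^s be the algebraic toric set parameterized by ν_1,…,ν_s ∈ ℕ^n and I(X) ⊆ S its vanishing ideal. Let f = t^a − t^b ∈ I(X) with a, b ∈ ℕ^s and supp(a) ∩ supp(b) = ∅, and suppose there is an index i with a_i ≥ q−1 and that supp(b) ≠ ∅. Then there exist c, d ∈ ℕ^s and an index j ∈ {1,…,s} such that g = t^c − t^d ∈ I(X), either g = 0 or the total degree of g is strictly less than the total degree of f, and f − t_j·g lies in the ideal of S generated by {t_i^{q−1} − t_l^{q−1} : 1 ≤ i, l ≤ s}. -/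
open MvPolynomial

noncomputable section

/-- The vanishing ideal `I(X) ⊆ K[t_1,…,t_s]` of the algebraic toric set parameterized by
`ν_1,…,ν_s ∈ ℕ^n`. -/
def toricVanishingIdeal (K : Type) [Field K] {n s : ℕ} (ν : Fin s → Fin n → ℕ) :
    Ideal (MvPolynomial (Fin s) K) :=
  Ideal.span {f | (∃ d, f.IsHomogeneous d) ∧
    ∀ x : Fin n → Kˣ, eval (fun i => ((∏ j, x j ^ ν i j : Kˣ) : K)) f = 0}

/-!
Write `a = a' + (q-1)e_i` and, for some `j ∈ supp b`, `b = d + e_j`, and put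
`g = t^{a'} t_j^{q-2} - t^d`. Then `t_j g = t^{a'} t_j^{q-1} - t^b`, so
`f - t_j g = t^{a'} (t_i^{q-1} - t_j^{q-1})`, and `deg g = deg f - 1`.
Since `I(X)` is spanned by homogeneous polynomials, a binomial `t^u - t^w` lies in it exactly when
`|u| = |w|` and `x^u = x^w` on `X^*`. Every coordinate of a point of `X^* ⊆ (K^*)^s` satisfies
`x^{q-1} = 1`, so from `x^{a'} x_i^{q-1} = x^d x_j` one gets `x^{a'} x_j^{q-2} = x^d`,
i.e. `g ∈ I(X)`.
-/

section HomogeneousVanishingIdeal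

variable {σ ι R : Type*} [CommRing R]

def homogeneousVanishingIdeal (v : ι → σ → R) : Ideal (MvPolynomial σ R) :=
  Ideal.span {f | (∃ d, f.IsHomogeneous d) ∧ ∀ x, eval (v x) f = 0}

attribute [local instance] MvPolynomial.gradedAlgebra

theorem homogeneousVanishingIdeal_isHomogeneous (v : ι → σ → R) :
    (homogeneousVanishingIdeal v).IsHomogeneous (homogeneousSubmodule σ R) :=
  Ideal.homogeneous_span _ _ fun _ hf => hf.1

theorem eval_eq_zero_of_mem_homogeneousVanishingIdeal {v : ι → σ → R} {f : MvPolynomial σ R}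
    (hf : f ∈ homogeneousVanishingIdeal v) (x : ι) : eval (v x) f = 0 :=
  (Ideal.span_le (I := RingHom.ker (eval (v x))) |>.mpr fun _ hg => hg.2 x) hf

theorem isHomogeneous_monomial_sub_monomial {a b : σ →₀ ℕ} (h : a.degree = b.degree) (r : R) :
    (monomial a r - monomial b r).IsHomogeneous b.degree :=
  (isHomogeneous_monomial r h).sub (isHomogeneous_monomial r rfl)

theorem totalDegree_monomial_sub_monomial_of_ne [Nontrivial R] {a b : σ →₀ ℕ} (hab : a ≠ b)
    (h : a.degree = b.degree) : (monomial a (1 : R) - monomial b 1).totalDegree = b.degree :=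
  (isHomogeneous_monomial_sub_monomial h 1).totalDegree
    (sub_ne_zero.mpr ((monomial_left_injective one_ne_zero).ne hab))

theorem degree_eq_of_monomial_sub_monomial_mem {I : Ideal (MvPolynomial σ R)}
    (hI : I.IsHomogeneous (homogeneousSubmodule σ R)) {a b : σ →₀ ℕ} (ha : monomial a 1 ∉ I)
    (h : monomial a 1 - monomial b 1 ∈ I) : a.degree = b.degree := by
  by_contra hne
  have hcomp := homogeneousComponent_mem_of_mem hI h a.degree
  rw [map_sub, homogeneousComponent_of_mem (isHomogeneous_monomial 1 rfl),
    homogeneousComponent_of_mem (isHomogeneous_monomial 1 rfl), if_pos rfl, if_neg hne,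
    sub_zero] at hcomp
  exact ha hcomp

theorem eval_monomial_one_ne_zero [IsDomain R] {v : σ → R} (hv : ∀ k, v k ≠ 0) (a : σ →₀ ℕ) :
    eval v (monomial a 1) ≠ 0 := by
  rw [eval_monomial, one_mul, Finsupp.prod]
  exact Finset.prod_ne_zero_iff.mpr fun k _ => pow_ne_zero _ (hv k)

theorem monomial_sub_monomial_mem_homogeneousVanishingIdeal_iff [IsDomain R] [Nonempty ι]
    {v : ι → σ → R} (hv : ∀ x k, v x k ≠ 0) {a b : σ →₀ ℕ} :
    monomial a 1 - monomial b 1 ∈ homogeneousVanishingIdeal v ↔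
      a.degree = b.degree ∧ ∀ x, eval (v x) (monomial a 1) = eval (v x) (monomial b 1) := by
  refine ⟨fun h => ⟨?_, fun x => ?_⟩, fun ⟨hdeg, heval⟩ => ?_⟩
  · refine degree_eq_of_monomial_sub_monomial_mem (homogeneousVanishingIdeal_isHomogeneous v)
      (fun ha => ?_) h
    exact eval_monomial_one_ne_zero (hv (Classical.arbitrary ι)) a
      (eval_eq_zero_of_mem_homogeneousVanishingIdeal ha _)
  · rw [← sub_eq_zero, ← map_sub]
    exact eval_eq_zero_of_mem_homogeneousVanishingIdeal h x
  · refine Ideal.subset_span ⟨⟨_, isHomogeneous_monomial_sub_monomial hdeg 1⟩, fun x => ?_⟩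
    rw [map_sub, heval, sub_self]

theorem X_mul_monomial_add_single_sub_monomial (a d : σ →₀ ℕ) (j : σ) (m : ℕ) :
    X j * (monomial (a + Finsupp.single j m) (1 : R) - monomial d 1) =
      monomial (a + Finsupp.single j (m + 1)) 1 - monomial (d + Finsupp.single j 1) 1 := by
  simp only [monomial_add_single, mul_sub]
  ring

/-- On points whose coordinates are `(m+1)`-th roots of unity, `t_i^{m+1}` may be replaced by
`t_j^{m+1}`, after which the common factor `t_j` cancels. -/
theorem monomial_add_single_sub_monomial_mem_of_pow_eq_one [IsDomain R] [Nonempty ι]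
    {v : ι → σ → R} {m : ℕ} (hv : ∀ x k, v x k ^ (m + 1) = 1) {a d : σ →₀ ℕ} {i j : σ}
    (h : monomial (a + Finsupp.single i (m + 1)) 1 - monomial (d + Finsupp.single j 1) 1 ∈
      homogeneousVanishingIdeal v) :
    monomial (a + Finsupp.single j m) 1 - monomial d 1 ∈ homogeneousVanishingIdeal v := by
  have hv₀ : ∀ x k, v x k ≠ 0 := fun x k => (IsUnit.of_pow_eq_one (hv x k) m.succ_ne_zero).ne_zero
  rw [monomial_sub_monomial_mem_homogeneousVanishingIdeal_iff hv₀] at h ⊢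
  obtain ⟨hdeg, heval⟩ := h
  refine ⟨?_, fun x => ?_⟩
  · simp only [map_add, Finsupp.degree_single] at hdeg ⊢
    omega
  · have hx := heval x
    simp only [monomial_add_single, map_mul, map_pow, eval_X, hv, mul_one, pow_one] at hx ⊢
    apply mul_right_cancel₀ (hv₀ x j)
    rw [mul_assoc, ← pow_succ, hv, mul_one, hx]

end HomogeneousVanishingIdeal

def toricPoint {K : Type*} [Field K] {n s : ℕ} (ν : Fin s → Fin n → ℕ) (x : Fin n → Kˣ) :
    Fin s → K :=
  fun k => ((∏ m, x m ^ ν k m : Kˣ) : K)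

theorem toricVanishingIdeal_eq_homogeneousVanishingIdeal {K : Type} [Field K] {n s : ℕ}
    (ν : Fin s → Fin n → ℕ) :
    toricVanishingIdeal K ν = homogeneousVanishingIdeal (toricPoint ν) :=
  rfl

theorem toricPoint_pow_card_sub_one {K : Type*} [Field K] [Fintype K] {n s : ℕ}
    (ν : Fin s → Fin n → ℕ) (x : Fin n → Kˣ) (k : Fin s) :
    toricPoint ν x k ^ (Fintype.card K - 1) = 1 :=
  FiniteField.pow_card_sub_one_eq_one _ (Units.ne_zero _)

theorem degree_reduction_general
    (q n s : ℕ) (hq : 2 < q) (K : Type) [Field K] [Fintype K]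
    (hcard : Fintype.card K = q)
    (ν : Fin s → Fin n → ℕ)
    (a b : Fin s →₀ ℕ)
    (hf : (monomial a 1 - monomial b 1 : MvPolynomial (Fin s) K) ∈
      toricVanishingIdeal K ν)
    (hdisj : Disjoint a.support b.support)
    (i : Fin s) (hi : q - 1 ≤ a i)
    (hbne : b.support.Nonempty) :
    ∃ (c d : Fin s →₀ ℕ) (j : Fin s),
      (monomial c 1 - monomial d 1 : MvPolynomial (Fin s) K) ∈ toricVanishingIdeal K ν ∧
      ((monomial c 1 - monomial d 1 : MvPolynomial (Fin s) K) = 0 ∨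
        (monomial c 1 - monomial d 1 : MvPolynomial (Fin s) K).totalDegree <
          (monomial a 1 - monomial b 1 : MvPolynomial (Fin s) K).totalDegree) ∧
      (monomial a 1 - monomial b 1 : MvPolynomial (Fin s) K) -
          X j * (monomial c 1 - monomial d 1) ∈
        Ideal.span {p : MvPolynomial (Fin s) K |
          ∃ i' l : Fin s, p = X i' ^ (q - 1) - X l ^ (q - 1)} := by
  obtain ⟨j, hj⟩ := hbne
  have hab : a ≠ b := by
    rintro rfl
    simp [(Finset.disjoint_self_iff_empty _).mp hdisj] at hj
  obtain ⟨m, hm⟩ : ∃ m, q - 1 = m + 1 := ⟨q - 2, by omega⟩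
  rw [hm] at hi ⊢
  obtain ⟨a', rfl⟩ : ∃ a', a = a' + Finsupp.single i (m + 1) :=
    ⟨_, (tsub_add_cancel_of_le (Finsupp.single_le_iff.mpr hi)).symm⟩
  obtain ⟨d, rfl⟩ : ∃ d, b = d + Finsupp.single j 1 :=
    ⟨_, (tsub_add_cancel_of_le (Finsupp.single_le_iff.mpr
      (Nat.one_le_iff_ne_zero.mpr (Finsupp.mem_support_iff.mp hj)))).symm⟩
  rw [toricVanishingIdeal_eq_homogeneousVanishingIdeal] at hf ⊢
  have hv : ∀ (x : Fin n → Kˣ) k, toricPoint ν x k ^ (m + 1) = 1 := by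
    rw [← hm, ← hcard]
    exact toricPoint_pow_card_sub_one ν
  have hg := monomial_add_single_sub_monomial_mem_of_pow_eq_one hv hf
  have hv₀ : ∀ (x : Fin n → Kˣ) k, toricPoint ν x k ≠ 0 := fun _ _ => Units.ne_zero _
  have hdeg_f := (monomial_sub_monomial_mem_homogeneousVanishingIdeal_iff hv₀).mp hf |>.1
  have hdeg_g := (monomial_sub_monomial_mem_homogeneousVanishingIdeal_iff hv₀).mp hg |>.1
  refine ⟨a' + Finsupp.single j m, d, j, hg, Or.inr ?_, ?_⟩
  · rw [totalDegree_monomial_sub_monomial_of_ne hab hdeg_f, map_add, Finsupp.degree_single]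
    exact Nat.lt_succ_of_le (isHomogeneous_monomial_sub_monomial hdeg_g 1).totalDegree_le
  · rw [X_mul_monomial_add_single_sub_monomial, sub_sub_sub_cancel_right, monomial_add_single,
      monomial_add_single, ← mul_sub]
    exact Ideal.mul_mem_left _ _ (Ideal.subset_span ⟨i, j, rfl⟩)

/-- With `f = t^a − t^b ∈ I(X)`, `supp(a) ∩ supp(b) = ∅`, `a i ≥ q−1` for some
index `i`, and `supp(b) ≠ ∅`, there exist `c, d ∈ ℕ^s` and an index `j` with
`g = t^c − t^d ∈ I(X)`, `g = 0` or `deg g < deg f`, and `f − t_j·g` in the ideal generated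
by the toric relations `t_i^{q−1} − t_l^{q−1}`. -/
theorem degree_reduction
    (q n s : ℕ) (hq : 2 < q) (hs : 2 ≤ s) (K : Type) [Field K] [Fintype K]
    (hcard : Fintype.card K = q)
    (ν : Fin s → Fin n → ℕ)
    (a b : Fin s →₀ ℕ)
    (hf : (monomial a 1 - monomial b 1 : MvPolynomial (Fin s) K) ∈
      toricVanishingIdeal K ν)
    (hdisj : Disjoint a.support b.support)
    (i : Fin s) (hi : q - 1 ≤ a i)
    (hbne : b.support.Nonempty) :
    ∃ (c d : Fin s →₀ ℕ) (j : Fin s),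
      (monomial c 1 - monomial d 1 : MvPolynomial (Fin s) K) ∈ toricVanishingIdeal K ν ∧
      ((monomial c 1 - monomial d 1 : MvPolynomial (Fin s) K) = 0 ∨
        (monomial c 1 - monomial d 1 : MvPolynomial (Fin s) K).totalDegree <
          (monomial a 1 - monomial b 1 : MvPolynomial (Fin s) K).totalDegree) ∧
      (monomial a 1 - monomial b 1 : MvPolynomial (Fin s) K) -
          X j * (monomial c 1 - monomial d 1) ∈
        Ideal.span {p : MvPolynomial (Fin s) K |
          ∃ i' l : Fin s, p = X i' ^ (q - 1) - X l ^ (q - 1)} :=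
  degree_reduction_general q n s hq K hcard ν a b hf hdisj i hi hbne
end
end

section
/- Let X^* ⊆ (K^*)^s be the algebraic toric set parameterized by ν_1,…,ν_s ∈ ℕ^n and I(X) ⊆ S its vanishing ideal. Suppose s ≥ 4 and set k = ⌊s/2⌋. Then I(X) is generated as an ideal by a set of polynomials each of total degree at most k(q−2). -/
open MvPolynomial

noncomputable section

/-! Write `χ_a(x) = ∏ φ(x)_i ^ a_i` for the character of `G` given by the monomial `t^a` on the
points `φ(G)` of the torus. By Artin's linear independence of characters, a homogeneous polynomial
vanishing on these points has zero coefficient sum on every fibre of `a ↦ χ_a`, so it is a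
combination of binomials `t^a - t^b` with `|a| = |b|` and `χ_a = χ_b`. Such a binomial of degree
`d > D` is reduced to degree `d - 1`: a common variable is cancelled; otherwise the supports are
disjoint, so one of them, say that of `a`, has at most `s/2` elements, and `d > (s/2)(q-2)` forces
some `a_i ≥ q-1`. Since `t_i^(q-1) - t_j^(q-1)` (of degree `q-1 ≤ D`) vanishes on the torus, trading
`t_i^(q-1)` for `t_j^(q-1)` in `t^a` with `b_j ≠ 0` creates a common variable with `t^b`. -/

theorem Finsupp.exists_lt_apply_of_card_support_mul_lt {σ : Type*} {a : σ →₀ ℕ} {m : ℕ}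
    (h : a.support.card * m < a.degree) : ∃ i, m < a i := by
  by_contra! hle
  refine h.not_ge ?_
  rw [Finsupp.degree_apply, ← smul_eq_mul]
  exact Finset.sum_le_card_nsmul _ _ _ fun i _ => hle i

theorem Finsupp.card_support_add_card_support_le_of_disjoint {σ : Type*} [Fintype σ]
    {a b : σ →₀ ℕ}(h : Disjoint a.support b.support) :
    a.support.card + b.support.card ≤ Fintype.card σ := by
  classical
  rw [← Finset.card_union_of_disjoint h]
  exact Finset.card_le_univ _

theorem sum_fiber_eq_zero_of_sum_smul_eq_zero {G K ι : Type*} [Monoid G] [CommRing K]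
    [IsDomain K] [DecidableEq (G →* K)] {s : Finset ι} {c : ι → K} {χ : ι → G →* K}
    (h : ∑ i ∈ s, c i • ⇑(χ i) = 0) (ψ : G →* K) : ∑ i ∈ s with χ i = ψ, c i = 0 := by
  by_cases hψ : ψ ∈ s.image χ
  · refine linearIndependent_iff'.1 (linearIndependent_monoidHom G K) (s.image χ)
      (fun ψ => ∑ i ∈ s with χ i = ψ, c i) ?_ ψ hψ
    simp_rw [Finset.sum_smul]
    rw [← h, ← Finset.sum_fiberwise_of_maps_to fun i hi => Finset.mem_image_of_mem χ hi]
    refine Finset.sum_congr rfl fun ψ _ => Finset.sum_congr rfl fun i hi => ?_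
    rw [(Finset.mem_filter.1 hi).2]
  · refine Finset.sum_eq_zero fun i hi => (hψ ?_).elim
    obtain ⟨his, rfl⟩ := Finset.mem_filter.1 hi
    exact Finset.mem_image_of_mem χ his

theorem MvPolynomial.monomial_add_sub_monomial_add {σ R : Type*} [CommRing R]
    (c a b : σ →₀ ℕ) :
    monomial (c + a) (1 : R) - monomial (c + b) 1 =
      monomial c 1 * (monomial a 1 - monomial b 1) := by
  rw [mul_sub, monomial_mul, monomial_mul, one_mul]

section

variable {G σ K : Type*} [Monoid G] [Field K]

def monomialChar (φ : G →* (σ → Kˣ)) (a : σ →₀ ℕ) : G →* Kˣ where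
  toFun x := a.prod fun i k => φ x i ^ k
  map_one' := by simp
  map_mul' x y := by simp [mul_pow, Finsupp.prod_mul]

variable (φ : G →* (σ → Kˣ))

theorem monomialChar_apply (a : σ →₀ ℕ) (x : G) :
    monomialChar φ a x = a.prod fun i k => φ x i ^ k := rfl

theorem monomialChar_add (a b : σ →₀ ℕ) :
    monomialChar φ (a + b) = monomialChar φ a * monomialChar φ b := by
  ext1 x
  exact Finsupp.prod_add_index' (fun _ => pow_zero _) fun _ _ _ => pow_add _ _ _

theorem monomialChar_single (i : σ) (k : ℕ) (x : G) :
    monomialChar φ (Finsupp.single i k) x = φ x i ^ k :=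
  Finsupp.prod_single_index (pow_zero _)

theorem coe_monomialChar_apply (a : σ →₀ ℕ) (x : G) :
    (monomialChar φ a x : K) = a.prod fun i k => (φ x i : K) ^ k := by
  simp [monomialChar_apply, Finsupp.prod]

theorem monomialChar_add_left_inj {a b : σ →₀ ℕ} (c : σ →₀ ℕ) :
    monomialChar φ (c + a) = monomialChar φ (c + b) ↔ monomialChar φ a = monomialChar φ b := by
  simp only [monomialChar_add, mul_right_inj]

theorem monomialChar_single_card_sub_one [Fintype K] (i : σ) :
    monomialChar φ (Finsupp.single i (Fintype.card K - 1)) = 1 := by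
  ext1 x
  rw [monomialChar_single, MonoidHom.one_apply]
  exact Units.ext (FiniteField.pow_card_sub_one_eq_one _ (φ x i).ne_zero)

def homogeneousVanishingSet : Set (MvPolynomial σ K) :=
  {f | (∃ d, f.IsHomogeneous d) ∧ ∀ x, eval (fun i => (φ x i : K)) f = 0}

def lowDegreeVanishingSet (D : ℕ) : Set (MvPolynomial σ K) :=
  {f ∈ homogeneousVanishingSet φ | f.totalDegree ≤ D}

variable {φ}

theorem eval_monomial_sub_monomial (a b : σ →₀ ℕ) (x : G) :
    eval (fun i => (φ x i : K)) (monomial a 1 - monomial b 1) =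
      monomialChar φ a x - monomialChar φ b x := by
  simp [eval_monomial, coe_monomialChar_apply]

theorem monomial_sub_monomial_mem_lowDegreeVanishingSet {D : ℕ} {a b : σ →₀ ℕ}
    (hdeg : a.degree = b.degree) (hD : a.degree ≤ D) (hχ : monomialChar φ a = monomialChar φ b) :
    monomial a (1 : K) - monomial b 1 ∈ lowDegreeVanishingSet φ D := by
  have hhom : (monomial a (1 : K) - monomial b 1).IsHomogeneous a.degree :=
    (isHomogeneous_monomial _ rfl).sub (isHomogeneous_monomial _ hdeg.symm)
  refine ⟨⟨⟨_, hhom⟩, fun x => ?_⟩, hhom.totalDegree_le.trans hD⟩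
  rw [eval_monomial_sub_monomial, hχ, sub_self]

theorem monomial_sub_monomial_mem_of_common_var {I : Ideal (MvPolynomial σ K)} {n : ℕ}
    {a b : σ →₀ ℕ} {i : σ} (hai : a i ≠ 0) (hbi : b i ≠ 0) (ha : a.degree = n)
    (hb : b.degree = n) (hχ : monomialChar φ a = monomialChar φ b)
    (IH : ∀ a' b' : σ →₀ ℕ, a'.degree < n → a'.degree = b'.degree →
      monomialChar φ a' = monomialChar φ b' → monomial a' (1 : K) - monomial b' 1 ∈ I) :
    monomial a (1 : K) - monomial b 1 ∈ I := by
  obtain ⟨a', rfl⟩ := exists_add_of_le (Finsupp.single_le_iff.2 (Nat.one_le_iff_ne_zero.2 hai))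
  obtain ⟨b', rfl⟩ := exists_add_of_le (Finsupp.single_le_iff.2 (Nat.one_le_iff_ne_zero.2 hbi))
  simp only [map_add, Finsupp.degree_single] at ha hb
  rw [monomial_add_sub_monomial_add]
  exact I.mul_mem_left _ (IH a' b' (by omega) (by omega) ((monomialChar_add_left_inj φ _).1 hχ))

theorem mem_of_mem_homogeneousVanishingSet {I : Ideal (MvPolynomial σ K)}
    {f : MvPolynomial σ K} (hf : f ∈ homogeneousVanishingSet φ)
    (hI : ∀ a b : σ →₀ ℕ, a.degree = b.degree → monomialChar φ a = monomialChar φ b →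
      monomial a (1 : K) - monomial b 1 ∈ I) :
    f ∈ I := by
  classical
  obtain ⟨⟨d, hd⟩, hvan⟩ := hf
  have hdeg (a) (ha : a ∈ f.support) : a.degree = d := by
    rw [Finsupp.degree_eq_weight_one]
    exact hd (mem_support_iff.1 ha)
  let χ (a : σ →₀ ℕ) : G →* K := (Units.coeHom K).comp (monomialChar φ a)
  have hfib (ψ : G →* K) : ∑ a ∈ f.support with χ a = ψ, coeff a f = 0 := by
    refine sum_fiber_eq_zero_of_sum_smul_eq_zero (funext fun x => ?_) ψ
    simpa [χ, eval_eq, coe_monomialChar_apply, Finsupp.prod] using hvan x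
  let r (ψ : G →* K) : σ →₀ ℕ := Classical.epsilon fun b => b ∈ f.support ∧ χ b = ψ
  have hr (a) (ha : a ∈ f.support) : r (χ a) ∈ f.support ∧ χ (r (χ a)) = χ a :=
    Classical.epsilon_spec (p := fun b => b ∈ f.support ∧ χ b = χ a) ⟨a, ha, rfl⟩
  have hzero : ∑ a ∈ f.support, monomial (r (χ a)) (coeff a f) = 0 := by
    rw [← Finset.sum_fiberwise_of_maps_to fun a ha => Finset.mem_image_of_mem χ ha]
    refine Finset.sum_eq_zero fun ψ _ => ?_
    rw [Finset.sum_congr rfl fun a ha => by rw [(Finset.mem_filter.1 ha).2], ← map_sum, hfib,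
      map_zero]
  have hsplit : f = ∑ a ∈ f.support, C (coeff a f) * (monomial a 1 - monomial (r (χ a)) 1) := by
    conv_lhs => rw [f.as_sum, ← sub_zero (∑ _ ∈ _, _), ← hzero, ← Finset.sum_sub_distrib]
    simp only [mul_sub, C_mul_monomial, mul_one]
  rw [hsplit]
  refine I.sum_mem fun a ha => I.mul_mem_left _ (hI _ _ ?_ ?_)
  · rw [hdeg a ha, hdeg _ (hr a ha).1]
  · exact MonoidHom.ext fun x => Units.ext (DFunLike.congr_fun (hr a ha).2 x).symm

variable [Fintype K]

theorem monomial_sub_monomial_mem_of_card_sub_one_le {D n : ℕ} (hD : Fintype.card K - 1 ≤ D)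
    {a b : σ →₀ ℕ} {i j : σ} (hai : Fintype.card K - 1 ≤ a i) (hbj : b j ≠ 0)
    (ha : a.degree = n) (hb : b.degree = n) (hχ : monomialChar φ a = monomialChar φ b)
    (IH : ∀ a' b' : σ →₀ ℕ, a'.degree < n → a'.degree = b'.degree →
      monomialChar φ a' = monomialChar φ b' →
        monomial a' (1 : K) - monomial b' 1 ∈ Ideal.span (lowDegreeVanishingSet φ D)) :
    monomial a (1 : K) - monomial b 1 ∈ Ideal.span (lowDegreeVanishingSet φ D) := by
  set p := Fintype.card K - 1
  have hp : 1 ≤ p := Nat.le_sub_of_add_le Fintype.one_lt_card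
  obtain ⟨c, rfl⟩ := exists_add_of_le (Finsupp.single_le_iff.2 hai)
  obtain ⟨b', rfl⟩ := exists_add_of_le (Finsupp.single_le_iff.2 (Nat.one_le_iff_ne_zero.2 hbj))
  have hshift : Finsupp.single j p + c = Finsupp.single j 1 + (Finsupp.single j (p - 1) + c) := by
    rw [← add_assoc, ← Finsupp.single_add, Nat.add_sub_cancel' hp]
  have key : monomial (Finsupp.single i p + c) (1 : K) - monomial (Finsupp.single j 1 + b') 1 =
      monomial c 1 * (monomial (Finsupp.single i p) 1 - monomial (Finsupp.single j p) 1) +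
        monomial (Finsupp.single j 1) 1 *
          (monomial (Finsupp.single j (p - 1) + c) 1 - monomial b' 1) := by
    rw [← monomial_add_sub_monomial_add, ← monomial_add_sub_monomial_add, ← hshift,
      add_comm c, add_comm c]
    ring
  have hχc (k : σ) : monomialChar φ (Finsupp.single k p + c) = monomialChar φ c := by
    rw [monomialChar_add, monomialChar_single_card_sub_one]
    exact one_mul (monomialChar φ c)
  simp only [map_add, Finsupp.degree_single] at ha hb
  rw [key]
  refine add_mem (Ideal.mul_mem_left _ _ (Ideal.subset_span ?_)) (Ideal.mul_mem_left _ _ ?_)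
  · refine monomial_sub_monomial_mem_lowDegreeVanishingSet (by simp) (by simpa using hD) ?_
    rw [monomialChar_single_card_sub_one, monomialChar_single_card_sub_one]
  · refine IH _ _ ?_ ?_ ?_
    · simp only [map_add, Finsupp.degree_single]; omega
    · simp only [map_add, Finsupp.degree_single]; omega
    · rw [← monomialChar_add_left_inj φ (Finsupp.single j 1), ← hshift, hχc, ← hχ, hχc]

variable [Fintype σ]

theorem monomial_sub_monomial_mem_of_card_support_le {D n : ℕ} (hD₁ : Fintype.card K - 1 ≤ D)
    (hD₂ : Fintype.card σ / 2 * (Fintype.card K - 2) ≤ D) (hn : D < n) {a b : σ →₀ ℕ}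
    (hsupp : a.support.card ≤ Fintype.card σ / 2)
    (ha : a.degree = n) (hb : b.degree = n) (hχ : monomialChar φ a = monomialChar φ b)
    (IH : ∀ a' b' : σ →₀ ℕ, a'.degree < n → a'.degree = b'.degree →
      monomialChar φ a' = monomialChar φ b' →
        monomial a' (1 : K) - monomial b' 1 ∈ Ideal.span (lowDegreeVanishingSet φ D)) :
    monomial a (1 : K) - monomial b 1 ∈ Ideal.span (lowDegreeVanishingSet φ D) := by
  obtain ⟨i, hi⟩ : ∃ i, Fintype.card K - 2 < a i :=
    Finsupp.exists_lt_apply_of_card_support_mul_lt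
      ((Nat.mul_le_mul_right _ hsupp).trans_lt (by omega))
  have hb0 : b ≠ 0 := by
    rintro rfl
    simp only [map_zero] at hb
    omega
  obtain ⟨j, hj⟩ := Finsupp.support_nonempty_iff.2 hb0
  exact monomial_sub_monomial_mem_of_card_sub_one_le hD₁ (i := i) (by omega)
    (Finsupp.mem_support_iff.1 hj) ha hb hχ IH

theorem monomial_sub_monomial_mem_span_lowDegreeVanishingSet {D : ℕ}
    (hD₁ : Fintype.card K - 1 ≤ D) (hD₂ : Fintype.card σ / 2 * (Fintype.card K - 2) ≤ D)
    (a b : σ →₀ ℕ) (hdeg : a.degree = b.degree) (hχ : monomialChar φ a = monomialChar φ b) :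
    monomial a (1 : K) - monomial b 1 ∈ Ideal.span (lowDegreeVanishingSet φ D) := by
  induction hn : a.degree using Nat.strong_induction_on generalizing a b with
  | _ n IH =>
  replace IH : ∀ a' b' : σ →₀ ℕ, a'.degree < n → a'.degree = b'.degree →
      monomialChar φ a' = monomialChar φ b' →
        monomial a' (1 : K) - monomial b' 1 ∈ Ideal.span (lowDegreeVanishingSet φ D) :=
    fun a' b' hlt hdeg' hχ' => IH _ hlt a' b' hdeg' hχ' rfl
  have hbn : b.degree = n := hdeg ▸ hn
  by_cases hlow : n ≤ D
  · exact Ideal.subset_span (monomial_sub_monomial_mem_lowDegreeVanishingSet hdeg (hn ▸ hlow) hχ)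
  by_cases hcommon : ∃ i, a i ≠ 0 ∧ b i ≠ 0
  · obtain ⟨i, hai, hbi⟩ := hcommon
    exact monomial_sub_monomial_mem_of_common_var hai hbi hn hbn hχ IH
  have hdisj : Disjoint a.support b.support :=
    Finset.disjoint_left.2 fun i hia hib =>
      hcommon ⟨i, Finsupp.mem_support_iff.1 hia, Finsupp.mem_support_iff.1 hib⟩
  have hcard := Finsupp.card_support_add_card_support_le_of_disjoint hdisj
  rcases le_or_gt a.support.card (Fintype.card σ / 2) with hsmall | hbig
  · exact monomial_sub_monomial_mem_of_card_support_le hD₁ hD₂ (by omega) hsmall hn hbn hχ IH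
  · rw [← neg_sub]
    exact neg_mem (monomial_sub_monomial_mem_of_card_support_le hD₁ hD₂ (by omega) (by omega)
      hbn hn hχ.symm IH)

theorem span_lowDegreeVanishingSet_eq {D : ℕ} (hD₁ : Fintype.card K - 1 ≤ D)
    (hD₂ : Fintype.card σ / 2 * (Fintype.card K - 2) ≤ D) :
    Ideal.span (lowDegreeVanishingSet φ D) = Ideal.span (homogeneousVanishingSet φ) :=
  le_antisymm (Ideal.span_mono fun _ hf => hf.1) <| Ideal.span_le.2 fun _ hf =>
    mem_of_mem_homogeneousVanishingSet hf
      (monomial_sub_monomial_mem_span_lowDegreeVanishingSet hD₁ hD₂)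

end

def toricParam (K : Type*) [Field K] {n s : ℕ} (ν : Fin s → Fin n → ℕ) :
    (Fin n → Kˣ) →* (Fin s → Kˣ) where
  toFun x i := ∏ j, x j ^ ν i j
  map_one' := funext fun i => by simp
  map_mul' x y := funext fun i => by simp [mul_pow, Finset.prod_mul_distrib]

theorem toricVanishingIdeal_eq (K : Type) [Field K] {n s : ℕ} (ν : Fin s → Fin n → ℕ) :
    toricVanishingIdeal K ν = Ideal.span (homogeneousVanishingSet (toricParam K ν)) :=
  rfl

end

/-- If `s ≥ 4` and `k = ⌊s/2⌋`, then `I(X)` is generated by a set of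
polynomials each of total degree at most `k(q−2)`. -/
theorem generators_degree_bound
    (q n s : ℕ) (hq : 2 < q) (hs : 4 ≤ s) (K : Type) [Field K] [Fintype K]
    (hcard : Fintype.card K = q)
    (ν : Fin s → Fin n → ℕ) :
    ∃ F : Set (MvPolynomial (Fin s) K),
      (∀ f ∈ F, f.totalDegree ≤ (s / 2) * (q - 2)) ∧
      toricVanishingIdeal K ν = Ideal.span F := by
  subst hcard
  have hD : Fintype.card K - 1 ≤ s / 2 * (Fintype.card K - 2) :=
    calc Fintype.card K - 1 ≤ 2 * (Fintype.card K - 2) := by omega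
      _ ≤ s / 2 * (Fintype.card K - 2) := Nat.mul_le_mul_right _ (by omega)
  refine ⟨lowDegreeVanishingSet (toricParam K ν) (s / 2 * (Fintype.card K - 2)),
    fun f hf => hf.2, ?_⟩
  rw [toricVanishingIdeal_eq, span_lowDegreeVanishingSet_eq hD (by rw [Fintype.card_fin])]
end

section
/- Let G = C_{2k} be the even cycle (k ≥ 2, s = 2k) and let f = t^a − t^b ∈ I(X) be a nonzero binomial with a = (a_1,…,a_s), b = (b_1,…,b_s) ∈ ℕ^s such that |a| = |b|, supp(a) ∩ supp(b) = ∅, and a_i ≤ q−2 and b_j ≤ q−2 for all i, j. Then supp(a) ∪ supp(b) = {1,…,s}. -/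
/-!
Evaluating `t^a - t^b` at the point of `X*` coming from `x = (1, …, 1, g, 1, …, 1)`, with a
generator `g` of the cyclic group `Kˣ` in position `m + 1`, shows
`a_{m+1} + a_m ≡ b_{m+1} + b_m (mod q - 1)` for every `m`. If `a_i = b_i = 0`, this forces
`a_{i+1} ≡ b_{i+1}`, hence `a_{i+1} = b_{i+1}` as both are `< q - 1`, hence both vanish by
disjointness of the supports. Going once around the cycle, a vertex outside both supports
would give `a = b = 0`, contradicting `t^a ≠ t^b`.
-/

open MvPolynomial

noncomputable section

/-- The vanishing ideal `I(X) ⊆ K[t_1,…,t_{2k}]` of the algebraic toric set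
`X* = {(x_1x_2, x_2x_3, …, x_{2k}x_1) : x ∈ (Kˣ)^{2k}}` parameterized by the edges of the
even cycle `C_{2k}`. -/
def cycleVanishingIdeal (K : Type) [Field K] (k : ℕ) :
    Ideal (MvPolynomial (Fin (2 * k)) K) :=
  Ideal.span {f | (∃ d, f.IsHomogeneous d) ∧
    ∀ x : Fin (2 * k) → Kˣ,
      eval (fun i => ((x i * x (finRotate (2 * k) i) : Kˣ) : K)) f = 0}

theorem Finsupp.prod_pow_mul_comp {ι M : Type*} [CommMonoid M] (c : ι →₀ ℕ) (x : ι → M)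
    (σ : ι → ι) :
    (c.prod fun i e => (x i * x (σ i)) ^ e) =
      (c.prod fun i e => x i ^ e) * c.prod fun i e => x (σ i) ^ e := by
  simp only [mul_pow, Finsupp.prod_mul]

theorem Finsupp.prod_mulSingle_pow {ι M : Type*} [CommMonoid M] [DecidableEq ι] (c : ι →₀ ℕ)
    (j : ι) (y : M) : (c.prod fun i e => (Pi.mulSingle j y : ι → M) i ^ e) = y ^ c j := by
  rw [Finsupp.prod_eq_single (g := fun i e => (Pi.mulSingle j y : ι → M) i ^ e) j
    (fun i _ hij => by rw [Pi.mulSingle_eq_of_ne hij, one_pow]) (fun _ => pow_zero _),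
    Pi.mulSingle_eq_same]

theorem eval_units_monomial {ι R : Type*} [CommRing R] (x : ι → Rˣ) (c : ι →₀ ℕ) :
    eval (fun i => (x i : R)) (monomial c 1) = ((c.prod fun i e => x i ^ e : Rˣ) : R) := by
  rw [eval_monomial, one_mul, Finsupp.prod, Finsupp.prod, Units.coe_prod]
  simp only [Units.val_pow_eq_pow_val]

theorem eval_units_monomial_sub_monomial_eq_zero_iff {ι R : Type*} [CommRing R] (x : ι → Rˣ)
    (a b : ι →₀ ℕ) :
    eval (fun i => (x i : R)) (monomial a 1 - monomial b 1) = 0 ↔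
      (a.prod fun i e => x i ^ e) = b.prod fun i e => x i ^ e := by
  rw [map_sub, sub_eq_zero, eval_units_monomial, eval_units_monomial, Units.val_inj]

theorem modEq_card_sub_one_of_eval_edge_eq_zero {ι K : Type*} [Field K] [Fintype K]
    (σ : Equiv.Perm ι) (a b : ι →₀ ℕ)
    (hvan : ∀ x : ι → Kˣ,
      eval (fun i => ((x i * x (σ i) : Kˣ) : K)) (monomial a 1 - monomial b 1) = 0)
    (m : ι) : a (σ m) + a m ≡ b (σ m) + b m [MOD Fintype.card K - 1] := by
  classical
  obtain ⟨g, hg⟩ := IsCyclic.exists_ofOrder_eq_natCard (α := Kˣ)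
  rw [Nat.card_eq_fintype_card, Fintype.card_units] at hg
  set x : ι → Kˣ := Pi.mulSingle (σ m) g
  have hvalue : ∀ c : ι →₀ ℕ,
      (c.prod fun i e => (x i * x (σ i)) ^ e) = g ^ (c (σ m) + c m) := by
    intro c
    have hshift : ∀ i, x (σ i) = (Pi.mulSingle m g : ι → Kˣ) i := fun i => by
      simpa [x] using congrFun (Pi.mulSingle_comp_equiv σ (σ m) g) i
    rw [Finsupp.prod_pow_mul_comp]
    simp only [hshift]
    rw [Finsupp.prod_mulSingle_pow, Finsupp.prod_mulSingle_pow, pow_add]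
  have h := hvan x
  rw [eval_units_monomial_sub_monomial_eq_zero_iff (fun i => _ * _), hvalue, hvalue] at h
  exact hg ▸ pow_eq_pow_iff_modEq.mp h

theorem eval_eq_zero_of_mem_cycleVanishingIdeal {K : Type} [Field K] {k : ℕ}
    {f : MvPolynomial (Fin (2 * k)) K} (hf : f ∈ cycleVanishingIdeal K k)
    (x : Fin (2 * k) → Kˣ) :
    eval (fun i => ((x i * x (finRotate (2 * k) i) : Kˣ) : K)) f = 0 := by
  have hle : cycleVanishingIdeal K k ≤ RingHom.ker (eval _) :=
    Ideal.span_le.2 fun _ hf => hf.2 x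
  exact hle hf

theorem exists_finRotate_iterate_eq {n : ℕ} (i j : Fin n) : ∃ m, (finRotate n)^[m] i = j := by
  have := NeZero.of_pos i.pos
  exact ⟨(j - i).val, by rw [← finCycle_eq_finRotate_iterate, finCycle_apply, add_sub_cancel]⟩

theorem Finsupp.apply_eq_zero_of_disjoint_support {ι M : Type*} [Zero M] {a b : ι →₀ M}
    (hdisj : Disjoint a.support b.support) {j : ι} (hab : a j = b j) : a j = 0 := by
  by_contra h
  exact Finset.disjoint_left.mp hdisj (Finsupp.mem_support_iff.2 h)
    (Finsupp.mem_support_iff.2 (hab ▸ h))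

section EdgeCongruence

variable {ι : Type*} {σ : ι → ι} {N : ℕ} {a b : ι →₀ ℕ}

theorem apply_map_eq_zero_of_edge_modEq (hdisj : Disjoint a.support b.support)
    (ha : ∀ i, a i < N) (hb : ∀ i, b i < N)
    (hmod : ∀ m, a (σ m) + a m ≡ b (σ m) + b m [MOD N]) {i : ι} (hi : a i = 0 ∧ b i = 0) :
    a (σ i) = 0 ∧ b (σ i) = 0 := by
  have hmod_i := hmod i
  rw [hi.1, hi.2, add_zero, add_zero] at hmod_i
  have heq := hmod_i.eq_of_lt_of_lt (ha _) (hb _)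
  have ha0 := Finsupp.apply_eq_zero_of_disjoint_support hdisj heq
  exact ⟨ha0, heq ▸ ha0⟩

theorem support_union_eq_univ_of_edge_modEq [Fintype ι] [DecidableEq ι]
    (hσ : ∀ i j, ∃ n, σ^[n] i = j) (hab : a ≠ b) (hdisj : Disjoint a.support b.support) (ha : ∀ i, a i < N)
    (hb : ∀ i, b i < N) (hmod : ∀ m, a (σ m) + a m ≡ b (σ m) + b m [MOD N]) :
    a.support ∪ b.support = Finset.univ := by
  refine Finset.eq_univ_of_forall fun i => ?_
  by_contra hi
  simp only [Finset.mem_union, Finsupp.mem_support_iff, not_or, not_not] at hi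
  have hzero : ∀ j, a j = 0 ∧ b j = 0 := fun j => by
    obtain ⟨n, rfl⟩ := hσ i j
    exact Function.Iterate.rec (fun j => a j = 0 ∧ b j = 0) hi
      (fun _ => apply_map_eq_zero_of_edge_modEq hdisj ha hb hmod) n
  exact hab (Finsupp.ext fun j => (hzero j).1.trans (hzero j).2.symm)

end EdgeCongruence

theorem cycle_supports_cover_general
    (q k : ℕ) (hq : 2 < q) (K : Type) [Field K] [Fintype K]
    (hcard : Fintype.card K = q)
    (a b : Fin (2 * k) →₀ ℕ)
    (hne : (monomial a 1 - monomial b 1 : MvPolynomial (Fin (2 * k)) K) ≠ 0)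
    (hmem : (monomial a 1 - monomial b 1 : MvPolynomial (Fin (2 * k)) K) ∈
      cycleVanishingIdeal K k)
    (hdisj : Disjoint a.support b.support)
    (ha : ∀ i, a i ≤ q - 2) (hb : ∀ i, b i ≤ q - 2) :
    a.support ∪ b.support = Finset.univ := by
  have hmod := modEq_card_sub_one_of_eval_edge_eq_zero (finRotate (2 * k)) a b
    (eval_eq_zero_of_mem_cycleVanishingIdeal hmem)
  rw [hcard] at hmod
  exact support_union_eq_univ_of_edge_modEq exists_finRotate_iterate_eq
    (fun hab => hne (by rw [hab, sub_self])) hdisj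
    (fun i => by have := ha i; omega) (fun i => by have := hb i; omega) hmod

/-- Let `G = C_{2k}` (`k ≥ 2`) and let `f = t^a − t^b ∈ I(X)` be a nonzero
binomial with `|a| = |b|`, `supp(a) ∩ supp(b) = ∅` and all exponents `≤ q−2`.  Then
`supp(a) ∪ supp(b) = {1,…,2k}`. -/
theorem cycle_supports_cover
    (q k : ℕ) (hq : 2 < q) (hk : 2 ≤ k) (K : Type) [Field K] [Fintype K]
    (hcard : Fintype.card K = q)
    (a b : Fin (2 * k) →₀ ℕ)
    (hne : (monomial a 1 - monomial b 1 : MvPolynomial (Fin (2 * k)) K) ≠ 0)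
    (hmem : (monomial a 1 - monomial b 1 : MvPolynomial (Fin (2 * k)) K) ∈
      cycleVanishingIdeal K k)
    (hhom : (∑ i, a i) = ∑ i, b i)
    (hdisj : Disjoint a.support b.support)
    (ha : ∀ i, a i ≤ q - 2) (hb : ∀ i, b i ≤ q - 2) :
    a.support ∪ b.support = Finset.univ :=
  cycle_supports_cover_general q k hq K hcard a b hne hmem hdisj ha hb
end
end

section
/- Let G = C_{2k} be the even cycle (k ≥ 2, s = 2k). Let σ = A ⊔ B be a partition of {1,…,s} with 1 ∈ A, let r ∈ {1,…,q−2}, and suppose there exists i ∈ A with i > 2 and i−1 ∉ A. Let σ' = A' ⊔ B' be the partition with A' = (A∖{i}) ∪ {i−1} and B' = (B∖{i−1}) ∪ {i}. Then f_σ^r ∈ I(X) if and only if f_{σ'}^r ∈ I(X). -/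
open MvPolynomial

noncomputable section

/-- The recursive labelling function `ρ_σ^r` (with indices `0,…,s−1`, so that the paper's
index `i ∈ {1,…,s}` corresponds to `i−1` here).  The partition `σ = A ⊔ B` of
`{0,…,s−1}` is recorded by the finset `A`, `B` being its complement;
`ρ(0) = r` and `ρ(i+1) = q−1−ρ(i)` if `i` and `i+1` lie in the same part of `σ`,
`ρ(i+1) = ρ(i)` otherwise. -/
def rho (q : ℕ) (A : Finset ℕ) (r : ℕ) : ℕ → ℕ
  | 0 => r
  | i + 1 => if (i ∈ A ↔ i + 1 ∈ A) then q - 1 - rho q A r i else rho q A r i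

/-- The binomial `f_σ^r = t^a − t^b` associated to a partition `σ = A ⊔ B` of
`{0,…,2k−1}` (with `0 ∈ A`) and `r ∈ {1,…,q−2}`: `supp(a) = A`, `supp(b) = B`, and the
exponent of `t_i` is `ρ_σ^r(i)`. -/
def fsr (K : Type) [Field K] (q k : ℕ) (A : Finset ℕ) (r : ℕ) :
    MvPolynomial (Fin (2 * k)) K :=
  monomial (Finsupp.equivFunOnFinite.symm fun i : Fin (2 * k) =>
      if (i : ℕ) ∈ A then rho q A r i else 0) 1 -
  monomial (Finsupp.equivFunOnFinite.symm fun i : Fin (2 * k) =>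
      if (i : ℕ) ∈ A then 0 else rho q A r i) 1



/-!
Passing from `σ` to `σ'` moves `j - 1` to the `a`-side and `j` to the `b`-side and replaces the
common label `m = ρ(j - 1) = ρ(j)` there by `q - 1 - m`, all other labels being unchanged. Hence
`a' + m(e_{j-1} + e_j) = a + (q - 1) e_{j-1}` and `b' + m(e_{j-1} + e_j) = b + (q - 1) e_j`.
A binomial `t^a - t^b` lies in `I(X)` iff `|a| = |b|` and `t^a = t^b` on `X*`; both conditions are
unaffected by such a shift, because all coordinates of points of `X*` satisfy `y^(q-1) = 1`.
-/

namespace MvPolynomial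

variable {σ ι R : Type*} [CommRing R]

def homogeneousVanishingIdeal (U : ι → σ → Rˣ) : Ideal (MvPolynomial σ R) :=
  Ideal.span {f | (∃ d, f.IsHomogeneous d) ∧ ∀ x, eval (fun i => (U x i : R)) f = 0}

variable {U : ι → σ → Rˣ}

theorem eval_eq_zero_of_mem_homogeneousVanishingIdeal {f : MvPolynomial σ R}
    (hf : f ∈ homogeneousVanishingIdeal U) (x : ι) : eval (fun i => (U x i : R)) f = 0 :=
  (Ideal.span_le (I := RingHom.ker _)).2 (fun _ hg => RingHom.mem_ker.2 (hg.2 x)) hf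

attribute [local instance] MvPolynomial.gradedAlgebra in
theorem homogeneousVanishingIdeal_isHomogeneous :
    (homogeneousVanishingIdeal U).IsHomogeneous (homogeneousSubmodule σ R) :=
  Ideal.homogeneous_span _ _ fun _ ⟨⟨d, hd⟩, _⟩ => ⟨d, hd⟩

theorem isUnit_eval_monomial_one (u : σ → Rˣ) (a : σ →₀ ℕ) :
    IsUnit (eval (fun i => (u i : R)) (monomial a 1)) := by
  rw [eval_monomial, one_mul]
  exact IsUnit.prod_iff.2 fun i _ => (u i).isUnit.pow _

theorem monomial_sub_monomial_mem_homogeneousVanishingIdeal_iff [Nonempty ι] [Nontrivial R]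
    (a b : σ →₀ ℕ) :
    monomial a (1 : R) - monomial b 1 ∈ homogeneousVanishingIdeal U ↔
      a.degree = b.degree ∧
        ∀ x, eval (fun i => (U x i : R)) (monomial a 1) =
          eval (fun i => (U x i : R)) (monomial b 1) := by
  constructor
  · intro h
    refine ⟨by_contra fun hne => ?_, fun x => ?_⟩
    · have ha := homogeneousComponent_mem_of_mem homogeneousVanishingIdeal_isHomogeneous h a.degree
      rw [map_sub, homogeneousComponent_eq_self (isHomogeneous_monomial _ rfl),
        homogeneousComponent_of_mem (isHomogeneous_monomial (1 : R) (d := b) rfl), if_neg hne,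
        sub_zero] at ha
      obtain ⟨x⟩ := ‹Nonempty ι›
      exact (isUnit_eval_monomial_one (U x) a).ne_zero
        (eval_eq_zero_of_mem_homogeneousVanishingIdeal ha x)
    · exact sub_eq_zero.1 (by simpa using eval_eq_zero_of_mem_homogeneousVanishingIdeal h x)
  · rintro ⟨hdeg, heval⟩
    exact Ideal.subset_span ⟨⟨a.degree, (isHomogeneous_monomial _ rfl).sub
      (isHomogeneous_monomial _ hdeg.symm)⟩, fun x => by rw [map_sub, heval, sub_self]⟩

theorem monomial_sub_monomial_mem_homogeneousVanishingIdeal_iff_of_add_eq [Nonempty ι]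
    [Nontrivial R] {n : ℕ} (hU : ∀ x i, U x i ^ n = 1) {a b a' b' c : σ →₀ ℕ} {p p' : σ}
    (ha : a' + c = a + Finsupp.single p n) (hb : b' + c = b + Finsupp.single p' n) :
    monomial a (1 : R) - monomial b 1 ∈ homogeneousVanishingIdeal U ↔
      monomial a' (1 : R) - monomial b' 1 ∈ homogeneousVanishingIdeal U := by
  have eval_eq {d d' : σ →₀ ℕ} {p : σ} (h : d' + c = d + Finsupp.single p n) (x : ι) :
      eval (fun i => (U x i : R)) (monomial d 1) =
        eval (fun i => (U x i : R)) (monomial d' 1) *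
          eval (fun i => (U x i : R)) (monomial c 1) := by
    rw [← map_mul, monomial_mul, mul_one, h, monomial_add_single, map_mul, map_pow, eval_X,
      ← Units.val_pow_eq_pow_val, hU, Units.val_one, mul_one]
  rw [monomial_sub_monomial_mem_homogeneousVanishingIdeal_iff,
    monomial_sub_monomial_mem_homogeneousVanishingIdeal_iff]
  refine and_congr ?_ (forall_congr' fun x => ?_)
  · have hda := congrArg Finsupp.degree ha
    have hdb := congrArg Finsupp.degree hb
    simp only [map_add, Finsupp.degree_single] at hda hdb
    omega
  · rw [eval_eq ha, eval_eq hb, (isUnit_eval_monomial_one (U x) c).mul_left_inj]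

end MvPolynomial

theorem Finset.insert_erase_eq_symmDiff {α : Type*} [DecidableEq α] {s : Finset α} {a b : α}
    (ha : a ∈ s) (hb : b ∉ s) : insert b (s.erase a) = symmDiff s {b, a} := by
  ext x
  by_cases hxa : x = a <;> by_cases hxb : x = b <;> simp_all [Finset.mem_symmDiff]

theorem cycleVanishingIdeal_eq (K : Type) [Field K] (k : ℕ) :
    cycleVanishingIdeal K k =
      homogeneousVanishingIdeal fun (x : Fin (2 * k) → Kˣ) i => x i * x (finRotate (2 * k) i) :=
  rfl

section rho

variable {q r : ℕ} {A : Finset ℕ}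

-- `ρ` flips exactly at the steps `i → i + 1` inside one part of `σ`; before `n` there are
-- `n + [0 ∈ A] + [n ∈ A]` of them modulo 2.
theorem rho_eq_ite (hr : r ≤ q - 1) (n : ℕ) :
    rho q A r n = if (Even n ↔ (0 ∈ A ↔ n ∈ A)) then r else q - 1 - r := by
  induction n with
  | zero => simp [rho]
  | succ n ih =>
    rw [rho, ih]
    by_cases h0 : 0 ∈ A <;> by_cases hn : n ∈ A <;> by_cases hn1 : n + 1 ∈ A <;>
      by_cases he : Even n <;> simp [h0, hn, hn1, he, Nat.even_add_one] <;> omega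

theorem rho_symmDiff (hr : r ≤ q - 1) {T : Finset ℕ} (hT : 0 ∉ T) (n : ℕ) :
    rho q (symmDiff A T) r n = if n ∈ T then q - 1 - rho q A r n else rho q A r n := by
  rw [rho_eq_ite hr, rho_eq_ite hr]
  by_cases h0 : 0 ∈ A <;> by_cases hn : n ∈ A <;> by_cases hnT : n ∈ T <;>
    by_cases he : Even n <;> simp [Finset.mem_symmDiff, h0, hn, hnT, hT, he] <;> omega

theorem rho_sub_one_of_mem_of_notMem {j : ℕ} (hj : j ∈ A) (hj1 : j - 1 ∉ A) :
    rho q A r (j - 1) = rho q A r j := by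
  obtain ⟨i, rfl⟩ : ∃ i, j = i + 1 :=
    Nat.exists_eq_add_one.2 (Nat.pos_of_ne_zero (by rintro rfl; exact hj1 hj))
  simp_all [rho]

theorem rho_le (hr : r ≤ q - 1) (n : ℕ) : rho q A r n ≤ q - 1 := by
  rw [rho_eq_ite hr]
  split <;> omega

end rho

section exponents

def fsrExponentA (q k : ℕ) (A : Finset ℕ) (r : ℕ) : Fin (2 * k) →₀ ℕ :=
  Finsupp.equivFunOnFinite.symm fun i => if (i : ℕ) ∈ A then rho q A r i else 0

def fsrExponentB (q k : ℕ) (A : Finset ℕ) (r : ℕ) : Fin (2 * k) →₀ ℕ :=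
  Finsupp.equivFunOnFinite.symm fun i => if (i : ℕ) ∈ A then 0 else rho q A r i

theorem fsr_eq (K : Type) [Field K] (q k : ℕ) (A : Finset ℕ) (r : ℕ) :
    fsr K q k A r = monomial (fsrExponentA q k A r) 1 - monomial (fsrExponentB q k A r) 1 :=
  rfl

variable {q k r j : ℕ} {A : Finset ℕ} (hr : r ≤ q - 1) (hj2 : 2 ≤ j) (hjs : j < 2 * k)
  (hjA : j ∈ A) (hj1A : j - 1 ∉ A)
include hr hj2 hjA hj1A

theorem rho_symmDiff_pair (n : ℕ) :
    rho q (symmDiff A {j - 1, j}) r n =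
      if n ∈ ({j - 1, j} : Finset ℕ) then q - 1 - rho q A r j else rho q A r n := by
  rw [rho_symmDiff hr (by simp; omega)]
  refine if_ctx_congr Iff.rfl (fun hn => ?_) fun _ => rfl
  obtain rfl | rfl : n = j - 1 ∨ n = j := by simpa using hn
  · rw [rho_sub_one_of_mem_of_notMem hjA hj1A]
  · rfl

theorem fsrExponentA_symmDiff_add :
    fsrExponentA q k (symmDiff A {j - 1, j}) r +
        (Finsupp.single ⟨j, hjs⟩ (rho q A r j) +
          Finsupp.single ⟨j - 1, by omega⟩ (rho q A r j)) =
      fsrExponentA q k A r + Finsupp.single ⟨j - 1, by omega⟩ (q - 1) := by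
  have hle := rho_le (A := A) hr j
  ext ⟨i, hi⟩
  simp only [fsrExponentA, Finsupp.coe_add, Pi.add_apply, Finsupp.coe_equivFunOnFinite_symm,
    Finsupp.single_apply, Fin.mk.injEq, rho_symmDiff_pair hr hj2 hjA hj1A, Finset.mem_symmDiff,
    Finset.mem_insert, Finset.mem_singleton]
  rcases eq_or_ne i j with rfl | hij
  · simp [hjA, show i - 1 ≠ i by omega]
  rcases eq_or_ne i (j - 1) with rfl | hij1
  · simp [hj1A, hij, hij.symm]; omega
  · simp [hij, hij1, Ne.symm hij, Ne.symm hij1]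

theorem fsrExponentB_symmDiff_add :
    fsrExponentB q k (symmDiff A {j - 1, j}) r +
        (Finsupp.single ⟨j, hjs⟩ (rho q A r j) +
          Finsupp.single ⟨j - 1, by omega⟩ (rho q A r j)) =
      fsrExponentB q k A r + Finsupp.single ⟨j, hjs⟩ (q - 1) := by
  have hle := rho_le (A := A) hr j
  ext ⟨i, hi⟩
  simp only [fsrExponentB, Finsupp.coe_add, Pi.add_apply, Finsupp.coe_equivFunOnFinite_symm,
    Finsupp.single_apply, Fin.mk.injEq, rho_symmDiff_pair hr hj2 hjA hj1A, Finset.mem_symmDiff,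
    Finset.mem_insert, Finset.mem_singleton]
  rcases eq_or_ne i j with rfl | hij
  · simp [hjA, show i - 1 ≠ i by omega]; omega
  rcases eq_or_ne i (j - 1) with rfl | hij1
  · simp [hj1A, hij, hij.symm, rho_sub_one_of_mem_of_notMem hjA hj1A]
  · simp [hij, hij1, Ne.symm hij, Ne.symm hij1]

end exponents

theorem exchange_lemma_general
    (q k : ℕ) (K : Type) [Field K] [Fintype K]
    (hcard : Fintype.card K = q)
    (A : Finset ℕ)
    (r : ℕ) (hr2 : r ≤ q - 2)
    (j : ℕ) (hj2 : 2 ≤ j) (hjs : j < 2 * k) (hjA : j ∈ A) (hj1A : j - 1 ∉ A) :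
    fsr K q k A r ∈ cycleVanishingIdeal K k ↔
      fsr K q k (insert (j - 1) (A.erase j)) r ∈ cycleVanishingIdeal K k := by
  have hr : r ≤ q - 1 := by omega
  have hfermat (u : Kˣ) : u ^ (q - 1) = 1 :=
    Units.ext (by simpa [← hcard] using FiniteField.pow_card_sub_one_eq_one _ u.ne_zero)
  rw [Finset.insert_erase_eq_symmDiff hjA hj1A, fsr_eq, fsr_eq, cycleVanishingIdeal_eq]
  exact monomial_sub_monomial_mem_homogeneousVanishingIdeal_iff_of_add_eq (fun _ _ => hfermat _)
    (fsrExponentA_symmDiff_add hr hj2 hjs hjA hj1A) (fsrExponentB_symmDiff_add hr hj2 hjs hjA hj1A)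

/-- Let `G = C_{2k}` (`k ≥ 2`, `s = 2k`).  Let `σ = A ⊔ B` be a partition of
the index set with `0 ∈ A` (paper: `1 ∈ A`), `r ∈ {1,…,q−2}`, and suppose `j ∈ A` with
`j ≥ 2` (paper: `i > 2`) and `j − 1 ∉ A`.  Let `σ' = A' ⊔ B'` with
`A' = (A∖{j}) ∪ {j−1}` and `B' = (B∖{j−1}) ∪ {j}`.  Then `f_σ^r ∈ I(X)` iff
`f_{σ'}^r ∈ I(X)`. -/
theorem exchange_lemma
    (q k : ℕ) (hq : 2 < q) (hk : 2 ≤ k) (K : Type) [Field K] [Fintype K]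
    (hcard : Fintype.card K = q)
    (A : Finset ℕ) (hA : A ⊆ Finset.range (2 * k)) (h0 : 0 ∈ A)
    (r : ℕ) (hr1 : 1 ≤ r) (hr2 : r ≤ q - 2)
    (j : ℕ) (hj2 : 2 ≤ j) (hjs : j < 2 * k) (hjA : j ∈ A) (hj1A : j - 1 ∉ A) :
    fsr K q k A r ∈ cycleVanishingIdeal K k ↔
      fsr K q k (insert (j - 1) (A.erase j)) r ∈ cycleVanishingIdeal K k :=
  exchange_lemma_general q k K hcard A r hr2 j hj2 hjs hjA hj1A
end
end

section
/- Let G = C_{2k} be the even cycle (k ≥ 2, s = 2k). Fix 1 ≤ i ≤ s−2 and let σ_i : S → S be the K-algebra automorphism determined by σ_i(t_i) = t_{i+2}, σ_i(t_{i+2}) = t_i and σ_i(t_l) = t_l for l ∉ {i, i+2}. Let F be the set of all binomials ±f_σ^r, where r ranges over {1,…,q−2} and σ = A ⊔ B ranges over the partitions of {1,…,s} with |A| = |B| and 1 ∈ A, such that f_σ^r ∈ I(X). Then σ_i maps F bijectively onto itself. -/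
open MvPolynomial

noncomputable section

/-- The set `F` of all binomials `±f_σ^r`, for `r ∈ {1,…,q−2}` and `σ = A ⊔ B` a partition
of the index set with `|A| = |B|` and `0 ∈ A` (paper: `1 ∈ A`), such that
`f_σ^r ∈ I(X)`. -/
def fsrSet (K : Type) [Field K] (q k : ℕ) : Set (MvPolynomial (Fin (2 * k)) K) :=
  {p | ∃ (A : Finset ℕ) (r : ℕ), A ⊆ Finset.range (2 * k) ∧ 0 ∈ A ∧
    A.card = (Finset.range (2 * k) \ A).card ∧ 1 ≤ r ∧ r ≤ q - 2 ∧
    fsr K q k A r ∈ cycleVanishingIdeal K k ∧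
    (p = fsr K q k A r ∨ p = -fsr K q k A r)}


/-!
Two facts combine. First, `ρ_σ^r` has a closed form: the exponent of `t_j` is `r` when the
membership of `j` in `A` agrees with the parity of `j` (as it does for `j = 0 ∈ A`), and `r̂`
otherwise. Because `i` and `i + 2` have the same parity, `σ_i` turns the binomial of `A ⊔ B`
into the binomial of `σ_i(A) ⊔ σ_i(B)` built by the same rule, which is `±f_{σ'}^{r'}` once the
two parts are exchanged if necessary. Second, `X*` is stable under exchanging the edge
coordinates `i` and `i + 2`: on the path `v_i v_{i+1} v_{i+2} v_{i+3}` one rescales the two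
middle vertices. Hence `σ_i` maps `F` into `F`, and being an involution it permutes `F`.
-/

section EdgeProduct

def edgeProduct {α G : Type*} [Mul G] (ν : α → α) (x : α → G) (j : α) : G :=
  x j * x (ν j)

lemma exists_edgeProduct_comp_swap {α G : Type*} [DecidableEq α] [CommGroup G]
    {ν : Equiv.Perm α} (h1 : ∀ v, ν v ≠ v) (h2 : ∀ v, ν (ν v) ≠ v) (a : α) (x : α → G) :
    ∃ y : α → G, edgeProduct ν x ∘ Equiv.swap a (ν (ν a)) = edgeProduct ν y := by
  obtain ⟨b, hb⟩ : ∃ b, ν a = b := ⟨_, rfl⟩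
  obtain ⟨c, hc⟩ : ∃ c, ν b = c := ⟨_, rfl⟩
  obtain ⟨d, hd⟩ : ∃ d, ν c = d := ⟨_, rfl⟩
  have hab : a ≠ b := hb ▸ (h1 a).symm
  have hbc : b ≠ c := hc ▸ (h1 b).symm
  have hac : a ≠ c := hc ▸ hb ▸ (h2 a).symm
  have hbd : b ≠ d := hd ▸ hc ▸ (h2 b).symm
  have hcd : c ≠ d := hd ▸ (h1 c).symm
  refine ⟨fun j => if j = b then x c * x d / x a else if j = c then x a * x b / x d else x j,
    funext fun j => ?_⟩
  rw [hb, hc]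
  simp only [edgeProduct, Function.comp_apply]
  by_cases hja : j = a
  · simp [hja, hab, hac, hb, hd]
  by_cases hjb : j = b
  · rw [hjb, Equiv.swap_apply_of_ne_of_ne hab.symm hbc, hc, if_pos rfl, if_neg hbc.symm,
      if_pos rfl, div_mul_div_comm, eq_div_iff_mul_eq']
    simp [mul_comm, mul_left_comm]
  by_cases hjc : j = c
  · simp [hjc, hb, hd, hbc.symm, hbd.symm, hcd.symm]
  have hνb : ν j ≠ b := fun h => hja (ν.injective (h.trans hb.symm))
  have hνc : ν j ≠ c := fun h => hjb (ν.injective (h.trans hc.symm))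
  simp [Equiv.swap_apply_of_ne_of_ne hja hjc, hjb, hjc, hνb, hνc]

lemma val_finRotate {n : ℕ} (i : Fin n) :
    ((finRotate n i : Fin n) : ℕ) = if (i : ℕ) + 1 = n then (0 : ℕ) else (i : ℕ) + 1 := by
  obtain ⟨m, rfl⟩ := Nat.exists_eq_succ_of_ne_zero i.pos.ne'
  rw [coe_finRotate]
  simp [Fin.ext_iff]

lemma finRotate_ne_self {n : ℕ} (hn : 2 ≤ n) (v : Fin n) : finRotate n v ≠ v := by
  rw [Ne, Fin.ext_iff, val_finRotate]
  split_ifs <;> omega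

lemma finRotate_finRotate_ne_self {n : ℕ} (hn : 3 ≤ n) (v : Fin n) :
    finRotate n (finRotate n v) ≠ v := by
  rw [Ne, Fin.ext_iff, val_finRotate, val_finRotate]
  split_ifs <;> omega

lemma rename_mem_cycleVanishingIdeal {K : Type} [Field K] {k : ℕ}
    {e : Equiv.Perm (Fin (2 * k))}
    (he : ∀ x : Fin (2 * k) → Kˣ,
      ∃ y, edgeProduct (finRotate _) x ∘ e = edgeProduct (finRotate _) y)
    {f : MvPolynomial (Fin (2 * k)) K} (hf : f ∈ cycleVanishingIdeal K k) :
    rename e f ∈ cycleVanishingIdeal K k := by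
  have hmap := Ideal.mem_map_of_mem (rename e) hf
  rw [cycleVanishingIdeal, Ideal.map_span] at hmap
  refine Ideal.span_mono ?_ hmap
  rintro _ ⟨g, ⟨⟨d, hd⟩, hg⟩, rfl⟩
  refine ⟨⟨d, hd.rename_isHomogeneous⟩, fun x => ?_⟩
  obtain ⟨y, hy⟩ := he x
  rw [eval_rename]
  convert hg y using 3
  exact congrArg (Units.val ∘ ·) hy

lemma rename_swap_mem_cycleVanishingIdeal {K : Type} [Field K] {k : ℕ} {i i' : Fin (2 * k)}
    (hii' : (i' : ℕ) = i + 2) {f : MvPolynomial (Fin (2 * k)) K}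
    (hf : f ∈ cycleVanishingIdeal K k) :
    rename (Equiv.swap i i') f ∈ cycleVanishingIdeal K k := by
  have hn : 3 ≤ 2 * k := by omega
  have hi' : i' = finRotate _ (finRotate _ i) :=
    Fin.ext (by rw [val_finRotate, val_finRotate]; split_ifs <;> omega)
  subst hi'
  exact rename_mem_cycleVanishingIdeal (fun x => exists_edgeProduct_comp_swap
    (finRotate_ne_self (by omega)) (finRotate_finRotate_ne_self hn) i x) hf

end EdgeProduct

section Exponents

def parityExponent (q : ℕ) (A : Finset ℕ) (c j : ℕ) : ℕ :=
  if (Even j ↔ j ∈ A) then c else q - 1 - c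

lemma rho_eq_parityExponent {q r : ℕ} {A : Finset ℕ} (hr : r ≤ q - 1) (h0 : 0 ∈ A) :
    rho q A r = parityExponent q A r := by
  funext j
  induction j with
  | zero => simp [rho, parityExponent, h0]
  | succ j ih =>
    simp only [rho, ih, parityExponent, Nat.even_add_one]
    by_cases hj : j ∈ A <;> by_cases hj1 : j + 1 ∈ A <;> by_cases he : Even j <;>
      simp [hj, hj1, he] <;> omega

lemma even_swap_apply_iff {a b : ℕ} (hab : Even a ↔ Even b) (j : ℕ) :
    Even (Equiv.swap a b j) ↔ Even j := by
  rw [Equiv.swap_apply_def]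
  split_ifs with h1 h2
  · rw [h1, hab]
  · rw [h2, hab]
  · rfl

lemma parityExponent_map_swap {q a b c : ℕ} (A : Finset ℕ) (hab : Even a ↔ Even b) :
    parityExponent q (A.map (Equiv.swap a b).toEmbedding) c =
      parityExponent q A c ∘ Equiv.swap a b := by
  funext j
  simp only [parityExponent, Function.comp_apply, Finset.mem_map_equiv, Equiv.symm_swap,
    even_swap_apply_iff hab]

lemma parityExponent_range_sdiff {q c n j : ℕ} (A : Finset ℕ) (hc : c ≤ q - 1) (hj : j < n) :
    parityExponent q (Finset.range n \ A) c j = parityExponent q A (q - 1 - c) j := by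
  simp only [parityExponent, Finset.mem_sdiff, Finset.mem_range, hj, true_and]
  by_cases h : (Even j ↔ j ∈ A)
  · rw [if_neg (by tauto), if_pos h]
  · rw [if_pos (by tauto), if_neg h]
    omega

end Exponents

section SplitBinomial

def splitBinomial (K : Type) [Field K] (n : ℕ) (A : Finset ℕ) (e : ℕ → ℕ) :
    MvPolynomial (Fin n) K :=
  monomial (Finsupp.equivFunOnFinite.symm fun j : Fin n => if (j : ℕ) ∈ A then e j else 0) 1 -
  monomial (Finsupp.equivFunOnFinite.symm fun j : Fin n => if (j : ℕ) ∈ A then 0 else e j) 1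

variable {K : Type} [Field K] {n : ℕ}

lemma splitBinomial_congr (A : Finset ℕ) {e e' : ℕ → ℕ} (h : ∀ j < n, e j = e' j) :
    splitBinomial K n A e = splitBinomial K n A e' := by
  unfold splitBinomial
  congr 3 <;> ext j <;> simp only [Finsupp.coe_equivFunOnFinite_symm, h j j.isLt]

lemma splitBinomial_range_sdiff (A : Finset ℕ) (e : ℕ → ℕ) :
    splitBinomial K n (Finset.range n \ A) e = -splitBinomial K n A e := by
  simp only [splitBinomial, neg_sub, Finset.mem_sdiff, Finset.mem_range, Fin.is_lt, true_and,
    ite_not]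

lemma rename_swap_splitBinomial (i i' : Fin n) (A : Finset ℕ) (e : ℕ → ℕ) :
    rename (Equiv.swap i i') (splitBinomial K n A e) =
      splitBinomial K n (A.map (Equiv.swap (i : ℕ) i').toEmbedding)
        (e ∘ Equiv.swap (i : ℕ) i') := by
  simp only [splitBinomial, map_sub, rename_monomial]
  congr 3 <;> ext j <;>
    simp [Finsupp.mapDomain_equiv_apply, Fin.val_injective.swap_apply]

lemma fsr_eq_splitBinomial {q k r : ℕ} {A : Finset ℕ} (hr : r ≤ q - 1) (h0 : 0 ∈ A) :
    fsr K q k A r = splitBinomial K (2 * k) A (parityExponent q A r) := by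
  rw [← rho_eq_parityExponent hr h0]
  rfl

lemma mem_fsrSet_iff {q k : ℕ} (hk : 0 < k) {p : MvPolynomial (Fin (2 * k)) K} :
    p ∈ fsrSet K q k ↔ ∃ (A : Finset ℕ) (c : ℕ), A ⊆ Finset.range (2 * k) ∧
      A.card = (Finset.range (2 * k) \ A).card ∧ 1 ≤ c ∧ c ≤ q - 2 ∧
      splitBinomial K (2 * k) A (parityExponent q A c) ∈ cycleVanishingIdeal K k ∧
      (p = splitBinomial K (2 * k) A (parityExponent q A c) ∨
        p = -splitBinomial K (2 * k) A (parityExponent q A c)) := by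
  constructor
  · rintro ⟨A, r, hA, h0, hcard, hr1, hr2, hI, hp⟩
    rw [fsr_eq_splitBinomial (by omega) h0] at hI hp
    exact ⟨A, r, hA, hcard, hr1, hr2, hI, hp⟩
  rintro ⟨A, c, hA, hcard, hc1, hc2, hI, hp⟩
  by_cases h0 : 0 ∈ A
  · rw [← fsr_eq_splitBinomial (by omega) h0] at hI hp
    exact ⟨A, c, hA, h0, hcard, hc1, hc2, hI, hp⟩
  -- otherwise `p` is `∓f_{σ'}^{ĉ}`, where `σ'` exchanges the two parts of `σ`
  have h0' : 0 ∈ Finset.range (2 * k) \ A :=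
    Finset.mem_sdiff.2 ⟨Finset.mem_range.2 (by omega), h0⟩
  have hB : fsr K q k (Finset.range (2 * k) \ A) (q - 1 - c) =
      -splitBinomial K (2 * k) A (parityExponent q A c) := by
    rw [fsr_eq_splitBinomial (by omega) h0',
      splitBinomial_congr _ fun j hj => parityExponent_range_sdiff A (by omega) hj,
      Nat.sub_sub_self (by omega), splitBinomial_range_sdiff]
  refine ⟨_, q - 1 - c, Finset.sdiff_subset, h0', ?_, by omega, by omega,
    hB ▸ neg_mem hI, ?_⟩
  · rw [Finset.sdiff_sdiff_eq_self hA, hcard]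
  · rcases hp with rfl | rfl
    · exact Or.inr (by rw [hB, neg_neg])
    · exact Or.inl hB.symm

lemma Finset.map_swap_range {a b n : ℕ} (ha : a < n) (hb : b < n) :
    (Finset.range n).map (Equiv.swap a b).toEmbedding = Finset.range n := by
  refine Finset.map_perm fun x hx => ?_
  obtain ⟨-, rfl | rfl⟩ := Equiv.swap_apply_ne_self_iff.1 hx <;> simpa

lemma mapsTo_rename_swap_fsrSet {q k : ℕ} {i i' : Fin (2 * k)} (hii' : (i' : ℕ) = i + 2) :
    Set.MapsTo (rename (Equiv.swap i i')) (fsrSet K q k) (fsrSet K q k) := by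
  have hk : 0 < k := by omega
  set σ := Equiv.swap (i : ℕ) i'
  have hrange : (Finset.range (2 * k)).map σ.toEmbedding = Finset.range (2 * k) :=
    Finset.map_swap_range i.isLt i'.isLt
  have hren : ∀ A c, rename (Equiv.swap i i') (splitBinomial K (2 * k) A (parityExponent q A c)) =
      splitBinomial K (2 * k) (A.map σ.toEmbedding) (parityExponent q (A.map σ.toEmbedding) c) :=
    fun A c => by
      rw [rename_swap_splitBinomial, parityExponent_map_swap A (by simp [hii', Nat.even_add])]
  intro p hp
  rw [mem_fsrSet_iff hk] at hp ⊢
  obtain ⟨A, c, hA, hcard, hc1, hc2, hI, hp⟩ := hp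
  refine ⟨A.map σ.toEmbedding, c, hrange ▸ Finset.map_subset_map.2 hA, ?_, hc1, hc2,
    hren A c ▸ rename_swap_mem_cycleVanishingIdeal hii' hI, ?_⟩
  · rwa [← hrange, ← Finset.map_sdiff, Finset.card_map, Finset.card_map]
  · rcases hp with rfl | rfl
    · exact Or.inl (hren A c)
    · exact Or.inr (by rw [map_neg, hren])

end SplitBinomial

theorem swap_permutes_generators_general
    (q k : ℕ) (K : Type) [Field K]
    (i i' : Fin (2 * k)) (hii' : (i' : ℕ) = (i : ℕ) + 2) :
    (fun p : MvPolynomial (Fin (2 * k)) K =>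
        rename (Equiv.swap i i') p) '' fsrSet K q k = fsrSet K q k := by
  have hmaps := mapsTo_rename_swap_fsrSet (K := K) (q := q) hii'
  have hinv : Function.Involutive (rename (Equiv.swap i i') : MvPolynomial (Fin (2 * k)) K → _) :=
    fun p => by
      rw [rename_rename, ← Equiv.coe_trans, Equiv.swap_swap, Equiv.coe_refl, rename_id,
        AlgHom.id_apply]
  exact hmaps.image_subset.antisymm fun p hp => ⟨_, hmaps hp, hinv p⟩

/-- Let `G = C_{2k}` (`k ≥ 2`, `s = 2k`).  For `i` with `i + 2 ≤ s − 1`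
(paper: `1 ≤ i ≤ s−2`, one-based), the `K`-algebra automorphism `σ_i` of `S` exchanging
`t_i` and `t_{i+2}` and fixing the other variables maps the set `F` of all binomials
`±f_σ^r` lying in `I(X)` bijectively onto itself. -/
theorem swap_permutes_generators
    (q k : ℕ) (hq : 2 < q) (hk : 2 ≤ k) (K : Type) [Field K] [Fintype K]
    (hcard : Fintype.card K = q)
    (i i' : Fin (2 * k)) (hii' : (i' : ℕ) = (i : ℕ) + 2) :
    (fun p : MvPolynomial (Fin (2 * k)) K =>
        rename (Equiv.swap i i') p) '' fsrSet K q k = fsrSet K q k :=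
  swap_permutes_generators_general q k K i i' hii'
end
end
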